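/- arXiv:1907.00553 — 9 statements merged into one kernel-verified Lean document; each statement's English description precedes it below -/
import Mathlib

section
/- Let B be a symmetric positive definite n×n real matrix, let L, L_p, L_i > 0 be real scalars, and set R = L·B. Define the 3n×3n block matrices A = [[0, I, 0], [0, 0, I], [0, −L_i·I, −L_p·I]], the 3n×n matrix B₀ = [0; 0; B⁻¹], P = [[L_i²·B + L_i L_p·R, L_p L_i·B + L_i·R, L_i·B], [L_p L_i·B + L_i·R, L_p²·B + L_p·R, L_p·B], [L_i·B, L_p·B, B]], and Q = blockdiag(L_i²·R, (L_p² − 2L_i)·R, R). Then the algebraic Riccati equation AᵀP + PA − P B₀ R B₀ᵀ P + Q = 0 holds. -/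
open Matrix

/-- A `3×3` block matrix with `n×n` blocks, indexed by `Fin 3 × Fin n`. -/
def blk3 {n : ℕ} (M : Matrix (Fin 3) (Fin 3) (Matrix (Fin n) (Fin n) ℝ)) :
    Matrix (Fin 3 × Fin n) (Fin 3 × Fin n) ℝ :=
  Matrix.of fun p q => M p.1 q.1 p.2 q.2

/-- A `3×1` block column matrix with `n×n` blocks. -/
def blkCol3 {n : ℕ} (M : Fin 3 → Matrix (Fin n) (Fin n) ℝ) :
    Matrix (Fin 3 × Fin n) (Fin n) ℝ :=
  Matrix.of fun p j => M p.1 p.2 j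

namespace PidAux

def blkRow3 {n : ℕ} (M : Fin 3 → Matrix (Fin n) (Fin n) ℝ) :
    Matrix (Fin n) (Fin 3 × Fin n) ℝ :=
  Matrix.of fun i q => M q.1 i q.2

variable {n : ℕ}

lemma blk3_mul (M N : Matrix (Fin 3) (Fin 3) (Matrix (Fin n) (Fin n) ℝ)) :
    blk3 M * blk3 N = blk3 (M * N) := by
  ext ⟨i, a⟩ ⟨j, b⟩
  simp [blk3, Matrix.mul_apply, Fintype.sum_prod_type, Matrix.sum_apply]

lemma blk3_add (M N : Matrix (Fin 3) (Fin 3) (Matrix (Fin n) (Fin n) ℝ)) :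
    blk3 (M + N) = blk3 M + blk3 N := by
  ext ⟨i, a⟩ ⟨j, b⟩; simp [blk3]

lemma blk3_sub (M N : Matrix (Fin 3) (Fin 3) (Matrix (Fin n) (Fin n) ℝ)) :
    blk3 (M - N) = blk3 M - blk3 N := by
  ext ⟨i, a⟩ ⟨j, b⟩; simp [blk3]

lemma blk3_zero : blk3 (0 : Matrix (Fin 3) (Fin 3) (Matrix (Fin n) (Fin n) ℝ)) = 0 := by
  ext ⟨i, a⟩ ⟨j, b⟩; simp [blk3]

lemma blk3_transpose (M : Matrix (Fin 3) (Fin 3) (Matrix (Fin n) (Fin n) ℝ)) :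
    (blk3 M)ᵀ = blk3 (Mᵀ.map Matrix.transpose) := by
  ext ⟨i, a⟩ ⟨j, b⟩; rfl

lemma blk3_mul_blkCol3 (M : Matrix (Fin 3) (Fin 3) (Matrix (Fin n) (Fin n) ℝ))
    (v : Fin 3 → Matrix (Fin n) (Fin n) ℝ) :
    blk3 M * blkCol3 v = blkCol3 (fun i => ∑ k, M i k * v k) := by
  ext ⟨i, a⟩ b
  simp [blk3, blkCol3, Matrix.mul_apply, Fintype.sum_prod_type, Matrix.sum_apply]

lemma blkCol3_mul (v : Fin 3 → Matrix (Fin n) (Fin n) ℝ) (S : Matrix (Fin n) (Fin n) ℝ) :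
    blkCol3 v * S = blkCol3 (fun i => v i * S) := by
  ext ⟨i, a⟩ b
  simp [blkCol3, Matrix.mul_apply]

lemma transpose_blkCol3 (v : Fin 3 → Matrix (Fin n) (Fin n) ℝ) :
    (blkCol3 v)ᵀ = blkRow3 (fun k => (v k)ᵀ) := by
  ext a ⟨j, b⟩; rfl

lemma blkCol3_mul_blkRow3 (u w : Fin 3 → Matrix (Fin n) (Fin n) ℝ) :
    blkCol3 u * blkRow3 w = blk3 (Matrix.of fun i j => u i * w j) := by
  ext ⟨i, a⟩ ⟨j, b⟩
  simp [blk3, blkCol3, blkRow3, Matrix.mul_apply]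

end PidAux

/-- The algebraic Riccati equation `AᵀP + PA − P B₀ R B₀ᵀ P + Q = 0` for the
closed-loop matrices of the PID-type friction observer `C(s) = −BL(s + L_p + L_i/s)`. -/
theorem pid_riccati_equation
    (n : ℕ) (B : Matrix (Fin n) (Fin n) ℝ) (hBsymm : B.IsSymm) (hB : B.PosDef)
    (L Lp Li : ℝ) (hL : 0 < L) (hLp : 0 < Lp) (hLi : 0 < Li)
    (R : Matrix (Fin n) (Fin n) ℝ) (hR : R = L • B)
    (A : Matrix (Fin 3 × Fin n) (Fin 3 × Fin n) ℝ)
    (hA : A = blk3 !![0, 1, 0; 0, 0, 1; 0, -(Li • 1), -(Lp • 1)])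
    (B₀ : Matrix (Fin 3 × Fin n) (Fin n) ℝ)
    (hB₀ : B₀ = blkCol3 ![0, 0, B⁻¹])
    (P : Matrix (Fin 3 × Fin n) (Fin 3 × Fin n) ℝ)
    (hP : P = blk3 !![Li ^ 2 • B + (Li * Lp) • R, (Lp * Li) • B + Li • R, Li • B;
                      (Lp * Li) • B + Li • R, Lp ^ 2 • B + Lp • R, Lp • B;
                      Li • B, Lp • B, B])
    (Q : Matrix (Fin 3 × Fin n) (Fin 3 × Fin n) ℝ)
    (hQ : Q = blk3 !![Li ^ 2 • R, 0, 0; 0, (Lp ^ 2 - 2 * Li) • R, 0; 0, 0, R]) :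
    Aᵀ * P + P * A - P * B₀ * R * B₀ᵀ * P + Q = 0 := by
  subst hR hA hB₀ hP hQ
  have hBdet : IsUnit B.det := isUnit_iff_ne_zero.mpr (ne_of_gt hB.det_pos)
  have h1 : B⁻¹ * B = 1 := Matrix.nonsing_inv_mul B hBdet
  have h2 : B * B⁻¹ = 1 := Matrix.mul_nonsing_inv B hBdet
  have hBt : Bᵀ = B := hBsymm
  have hBinvT : (B⁻¹)ᵀ = B⁻¹ := by rw [Matrix.transpose_nonsing_inv, hBt]
  rw [PidAux.blk3_transpose, PidAux.blk3_mul, PidAux.blk3_mul,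
    PidAux.blk3_mul_blkCol3, PidAux.blkCol3_mul, PidAux.transpose_blkCol3,
    PidAux.blkCol3_mul_blkRow3, PidAux.blk3_mul,
    ← PidAux.blk3_add, ← PidAux.blk3_sub, ← PidAux.blk3_add,
    ← PidAux.blk3_zero (n := n)]
  refine congrArg blk3 ?_
  have e0 : (⟨0, by omega⟩ : Fin 3) = 0 := rfl
  have e1 : (⟨1, by omega⟩ : Fin 3) = 1 := rfl
  have e2 : (⟨2, by omega⟩ : Fin 3) = 2 := rfl
  refine Matrix.ext fun i j => ?_
  fin_cases i <;> fin_cases j <;>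
    simp only [e0, e1, e2] <;>
    simp only [Matrix.mul_apply, Fin.sum_univ_three, Matrix.map_apply, Matrix.add_apply,
      Matrix.sub_apply, Matrix.of_apply, Matrix.transpose_apply, Matrix.cons_val', Matrix.cons_val_zero,
      Matrix.cons_val_one, Matrix.head_cons, Matrix.empty_val',
      Matrix.cons_val_fin_one, Matrix.zero_apply, Matrix.cons_val_two, Matrix.tail_cons, Matrix.vecHead, Matrix.vecTail, Function.comp, Matrix.cons_val_succ,
      Matrix.transpose_smul, Matrix.transpose_one, Matrix.transpose_neg, Matrix.transpose_zero,
      Matrix.transpose_transpose, hBt, hBinvT] <;>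
    simp only [mul_assoc, h1, h2, mul_smul_comm, smul_mul_assoc, smul_smul,
      mul_one, one_mul, mul_zero, zero_mul, neg_mul, mul_neg, add_mul, mul_add,
      smul_add, smul_neg, neg_zero, add_zero, zero_add, smul_zero, sub_smul, neg_smul] <;>
    module
end

section
/- Let B be a symmetric positive definite n×n real matrix, let L, L_p, L_i > 0 be real scalars with L_p² > 2L_i, and set R = L·B. Then the 3n×3n matrix P = [[L_i²·B + L_i L_p·R, L_p L_i·B + L_i·R, L_i·B], [L_p L_i·B + L_i·R, L_p²·B + L_p·R, L_p·B], [L_i·B, L_p·B, B]] is symmetric positive definite. In fact, for x = (x₁, x₂, x₃) ∈ ℝ^{3n}, xᵀPx = (x₃ + L_p x₂ + L_i x₁)ᵀ B (x₃ + L_p x₂ + L_i x₁) + (x₁, x₂)ᵀ P₁ (x₁, x₂), where P₁ = [[L_i L_p·R, L_i·R], [L_i·R, L_p·R]] is positive definite. -/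
open Matrix

/-- A `2×2` block matrix with `n×n` blocks, indexed by `Fin 2 × Fin n`. -/
def blk2 {n : ℕ} (M : Matrix (Fin 2) (Fin 2) (Matrix (Fin n) (Fin n) ℝ)) :
    Matrix (Fin 2 × Fin n) (Fin 2 × Fin n) ℝ :=
  Matrix.of fun p q => M p.1 q.1 p.2 q.2

/-- Stack three `n`-vectors into a `3n`-vector. -/
def stack3 {n : ℕ} (x₁ x₂ x₃ : Fin n → ℝ) : Fin 3 × Fin n → ℝ :=
  fun p => ![x₁, x₂, x₃] p.1 p.2

/-- Stack two `n`-vectors into a `2n`-vector. -/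
def stack2 {n : ℕ} (x₁ x₂ : Fin n → ℝ) : Fin 2 × Fin n → ℝ :=
  fun p => ![x₁, x₂] p.1 p.2

lemma blk3_quad {n : ℕ} (M : Matrix (Fin 3) (Fin 3) (Matrix (Fin n) (Fin n) ℝ))
    (x₁ x₂ x₃ : Fin n → ℝ) :
    stack3 x₁ x₂ x₃ ⬝ᵥ (blk3 M *ᵥ stack3 x₁ x₂ x₃) =
      x₁ ⬝ᵥ (M 0 0 *ᵥ x₁) + x₁ ⬝ᵥ (M 0 1 *ᵥ x₂) + x₁ ⬝ᵥ (M 0 2 *ᵥ x₃)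
      + x₂ ⬝ᵥ (M 1 0 *ᵥ x₁) + x₂ ⬝ᵥ (M 1 1 *ᵥ x₂) + x₂ ⬝ᵥ (M 1 2 *ᵥ x₃)
      + x₃ ⬝ᵥ (M 2 0 *ᵥ x₁) + x₃ ⬝ᵥ (M 2 1 *ᵥ x₂) + x₃ ⬝ᵥ (M 2 2 *ᵥ x₃) := by
  simp [dotProduct, mulVec, blk3, stack3, Fintype.sum_prod_type, Fin.sum_univ_three,
    Finset.mul_sum, Finset.sum_add_distrib, mul_add]
  ring

lemma blk2_quad {n : ℕ} (M : Matrix (Fin 2) (Fin 2) (Matrix (Fin n) (Fin n) ℝ))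
    (x₁ x₂ : Fin n → ℝ) :
    stack2 x₁ x₂ ⬝ᵥ (blk2 M *ᵥ stack2 x₁ x₂) =
      x₁ ⬝ᵥ (M 0 0 *ᵥ x₁) + x₁ ⬝ᵥ (M 0 1 *ᵥ x₂)
      + x₂ ⬝ᵥ (M 1 0 *ᵥ x₁) + x₂ ⬝ᵥ (M 1 1 *ᵥ x₂) := by
  simp [dotProduct, mulVec, blk2, stack2, Fintype.sum_prod_type, Fin.sum_univ_two,
    Finset.mul_sum, Finset.sum_add_distrib, mul_add]
  ring

lemma dot_symm {n : ℕ} {B : Matrix (Fin n) (Fin n) ℝ} (hB : B.IsSymm)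
    (x y : Fin n → ℝ) : x ⬝ᵥ (B *ᵥ y) = y ⬝ᵥ (B *ᵥ x) := by
  have hBt : Bᵀ = B := hB
  rw [dotProduct_mulVec, ← mulVec_transpose, hBt, dotProduct_comm]

lemma blk3_isSymm {n : ℕ} (M : Matrix (Fin 3) (Fin 3) (Matrix (Fin n) (Fin n) ℝ))
    (h : ∀ i j, (M i j)ᵀ = M j i) : (blk3 M).IsSymm := by
  show (blk3 M)ᵀ = blk3 M
  ext ⟨i, j⟩ ⟨k, l⟩
  have := congrFun (congrFun (h i k) l) j
  simpa [blk3, Matrix.transpose_apply] using this.symm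

lemma blk2_isSymm {n : ℕ} (M : Matrix (Fin 2) (Fin 2) (Matrix (Fin n) (Fin n) ℝ))
    (h : ∀ i j, (M i j)ᵀ = M j i) : (blk2 M).IsSymm := by
  show (blk2 M)ᵀ = blk2 M
  ext ⟨i, j⟩ ⟨k, l⟩
  have := congrFun (congrFun (h i k) l) j
  simpa [blk2, Matrix.transpose_apply] using this.symm

lemma isHermitian_of_isSymm {m : Type*} (A : Matrix m m ℝ) (h : A.IsSymm) :
    A.IsHermitian := by
  have h1 : Aᴴ = Aᵀ := by ext i j; simp [conjTranspose_apply]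
  exact h1.trans h

/-- The Lyapunov matrix `P` of the PID-type friction observer is symmetric positive
definite; its quadratic form decomposes as
`xᵀPx = (x₃ + L_p x₂ + L_i x₁)ᵀ B (x₃ + L_p x₂ + L_i x₁) + (x₁,x₂)ᵀ P₁ (x₁,x₂)`,
with `P₁ = [[L_i L_p R, L_i R], [L_i R, L_p R]]` positive definite. -/
theorem pid_lyapunov_matrix_posdef
    (n : ℕ) (B : Matrix (Fin n) (Fin n) ℝ) (hBsymm : B.IsSymm) (hB : B.PosDef)
    (L Lp Li : ℝ) (hL : 0 < L) (hLp : 0 < Lp) (hLi : 0 < Li) (hgain : Lp ^ 2 > 2 * Li)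
    (R : Matrix (Fin n) (Fin n) ℝ) (hR : R = L • B)
    (P : Matrix (Fin 3 × Fin n) (Fin 3 × Fin n) ℝ)
    (hP : P = blk3 !![Li ^ 2 • B + (Li * Lp) • R, (Lp * Li) • B + Li • R, Li • B;
                      (Lp * Li) • B + Li • R, Lp ^ 2 • B + Lp • R, Lp • B;
                      Li • B, Lp • B, B])
    (P₁ : Matrix (Fin 2 × Fin n) (Fin 2 × Fin n) ℝ)
    (hP₁ : P₁ = blk2 !![(Li * Lp) • R, Li • R; Li • R, Lp • R]) :
    P.IsSymm ∧ P.PosDef ∧ P₁.PosDef ∧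
      ∀ x₁ x₂ x₃ : Fin n → ℝ,
        stack3 x₁ x₂ x₃ ⬝ᵥ (P *ᵥ stack3 x₁ x₂ x₃) =
          (x₃ + Lp • x₂ + Li • x₁) ⬝ᵥ (B *ᵥ (x₃ + Lp • x₂ + Li • x₁)) +
            stack2 x₁ x₂ ⬝ᵥ (P₁ *ᵥ stack2 x₁ x₂) := by
  have hBt : Bᵀ = B := hBsymm
  -- quadratic form of B
  have hBq : ∀ v : Fin n → ℝ, 0 ≤ v ⬝ᵥ (B *ᵥ v) := by
    intro v
    simpa using (posSemidef_iff_dotProduct_mulVec.mp hB.posSemidef).2 v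
  have hBqpos : ∀ v : Fin n → ℝ, v ≠ 0 → 0 < v ⬝ᵥ (B *ᵥ v) := by
    intro v hv
    simpa using (posDef_iff_dotProduct_mulVec.mp hB).2 hv
  -- symmetry of P
  have hPsymm : P.IsSymm := by
    rw [hP]
    apply blk3_isSymm
    intro i j
    fin_cases i <;> fin_cases j <;>
      simp [hR, transpose_add, transpose_smul, hBt]
  -- symmetry of P₁
  have hP₁symm : P₁.IsSymm := by
    rw [hP₁]
    apply blk2_isSymm
    intro i j
    fin_cases i <;> fin_cases j <;> simp [hR, transpose_smul, hBt]
  -- the quadratic form identity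
  have hquad : ∀ x₁ x₂ x₃ : Fin n → ℝ,
      stack3 x₁ x₂ x₃ ⬝ᵥ (P *ᵥ stack3 x₁ x₂ x₃) =
        (x₃ + Lp • x₂ + Li • x₁) ⬝ᵥ (B *ᵥ (x₃ + Lp • x₂ + Li • x₁)) +
          stack2 x₁ x₂ ⬝ᵥ (P₁ *ᵥ stack2 x₁ x₂) := by
    intro x₁ x₂ x₃
    rw [hP, hP₁, blk3_quad, blk2_quad]
    have h21 : x₂ ⬝ᵥ (B *ᵥ x₁) = x₁ ⬝ᵥ (B *ᵥ x₂) := dot_symm hBsymm _ _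
    have h31 : x₃ ⬝ᵥ (B *ᵥ x₁) = x₁ ⬝ᵥ (B *ᵥ x₃) := dot_symm hBsymm _ _
    have h32 : x₃ ⬝ᵥ (B *ᵥ x₂) = x₂ ⬝ᵥ (B *ᵥ x₃) := dot_symm hBsymm _ _
    simp [hR, add_mulVec, smul_mulVec, mulVec_add, mulVec_smul,
      dotProduct_add, add_dotProduct, dotProduct_smul, smul_dotProduct,
      smul_eq_mul, h21, h31, h32]
    ring
  -- the quadratic form of P₁ is positive on nonzero block vectors
  have hP₁key : ∀ v₁ v₂ : Fin n → ℝ, (v₁ ≠ 0 ∨ v₂ ≠ 0) →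
      0 < stack2 v₁ v₂ ⬝ᵥ (P₁ *ᵥ stack2 v₁ v₂) := by
    intro v₁ v₂ hv
    have h21 : v₂ ⬝ᵥ (B *ᵥ v₁) = v₁ ⬝ᵥ (B *ᵥ v₂) := dot_symm hBsymm _ _
    set q11 := v₁ ⬝ᵥ (B *ᵥ v₁) with hq11
    set q12 := v₁ ⬝ᵥ (B *ᵥ v₂) with hq12
    set q22 := v₂ ⬝ᵥ (B *ᵥ v₂) with hq22
    have hform : stack2 v₁ v₂ ⬝ᵥ (P₁ *ᵥ stack2 v₁ v₂) =
        L * (Li * Lp * q11 + 2 * Li * q12 + Lp * q22) := by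
      rw [hP₁, blk2_quad]
      simp [hR, smul_mulVec, dotProduct_smul, smul_eq_mul, h21,
        ← hq11, ← hq12, ← hq22]
      ring
    rw [hform]
    have hw : (Lp • v₁ + v₂) ⬝ᵥ (B *ᵥ (Lp • v₁ + v₂)) =
        Lp ^ 2 * q11 + 2 * Lp * q12 + q22 := by
      simp [mulVec_add, mulVec_smul, dotProduct_add, add_dotProduct,
        dotProduct_smul, smul_dotProduct, smul_eq_mul, h21, ← hq11, ← hq12, ← hq22]
      ring
    have hLpLi : 0 < Lp ^ 2 - Li := by nlinarith
    have hpos : 0 < Lp * (Li * Lp * q11 + 2 * Li * q12 + Lp * q22) := by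
      have hid : Lp * (Li * Lp * q11 + 2 * Li * q12 + Lp * q22) =
          Li * ((Lp • v₁ + v₂) ⬝ᵥ (B *ᵥ (Lp • v₁ + v₂))) + (Lp ^ 2 - Li) * q22 := by
        rw [hw]; ring
      rw [hid]
      rcases eq_or_ne v₂ 0 with h2 | h2
      · have h1 : v₁ ≠ 0 := by
          rcases hv with h | h
          · exact h
          · exact absurd h2 h
        have hwne : Lp • v₁ + v₂ ≠ 0 := by
          rw [h2, add_zero]
          exact smul_ne_zero (ne_of_gt hLp) h1
        have := hBqpos _ hwne
        have hq22z : q22 = 0 := by rw [hq22, h2]; simp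
        rw [hq22z]
        nlinarith
      · have h2p := hBqpos _ h2
        have h1n := hBq (Lp • v₁ + v₂)
        nlinarith
    nlinarith [hpos, hLp]
  refine ⟨hPsymm, posDef_iff_dotProduct_mulVec.mpr ⟨isHermitian_of_isSymm _ hPsymm, ?_⟩,
    posDef_iff_dotProduct_mulVec.mpr ⟨isHermitian_of_isSymm _ hP₁symm, ?_⟩, hquad⟩
  · -- P is positive definite
    intro x hx
    set v₁ : Fin n → ℝ := fun j => x (0, j) with hv₁
    set v₂ : Fin n → ℝ := fun j => x (1, j) with hv₂
    set v₃ : Fin n → ℝ := fun j => x (2, j) with hv₃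
    have hx' : x = stack3 v₁ v₂ v₃ := by
      funext p
      obtain ⟨i, j⟩ := p
      fin_cases i <;> rfl
    have hstar : star x = x := by simp
    rw [hstar, hx', hquad v₁ v₂ v₃]
    by_cases h12 : v₁ = 0 ∧ v₂ = 0
    · have hs2 : stack2 v₁ v₂ = 0 := by
        funext p
        obtain ⟨i, j⟩ := p
        fin_cases i <;> simp [stack2, h12.1, h12.2]
      have hform0 : stack2 v₁ v₂ ⬝ᵥ (P₁ *ᵥ stack2 v₁ v₂) = 0 := by
        rw [hs2]; simp
      have hv3 : v₃ ≠ 0 := by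
        intro h3
        apply hx
        rw [hx']
        funext p
        obtain ⟨i, j⟩ := p
        fin_cases i <;> simp [stack3, h12.1, h12.2, h3, Matrix.vecHead, Matrix.vecTail]
      have hy : (v₃ + Lp • v₂ + Li • v₁) ≠ 0 := by
        rw [h12.1, h12.2]
        simpa using hv3
      have := hBqpos _ hy
      rw [hform0]
      linarith
    · have hnz : v₁ ≠ 0 ∨ v₂ ≠ 0 := by tauto
      have h1 := hP₁key v₁ v₂ hnz
      have h2 := hBq (v₃ + Lp • v₂ + Li • v₁)
      linarith
  · -- P₁ is positive definite
    intro x hx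
    set v₁ : Fin n → ℝ := fun j => x (0, j) with hv₁
    set v₂ : Fin n → ℝ := fun j => x (1, j) with hv₂
    have hx' : x = stack2 v₁ v₂ := by
      funext p
      obtain ⟨i, j⟩ := p
      fin_cases i <;> rfl
    have hnz : v₁ ≠ 0 ∨ v₂ ≠ 0 := by
      by_contra h
      push_neg at h
      apply hx
      rw [hx']
      funext p
      obtain ⟨i, j⟩ := p
      fin_cases i <;> simp [stack2, h.1, h.2]
    have hstar : star x = x := by simp
    rw [hstar, hx']
    exact hP₁key v₁ v₂ hnz
end

section
/- Let B be a symmetric positive definite n×n real matrix, let L, L_p, L_i > 0 be real scalars with L_p² > 2L_i, and set R = L·B. With A, B₀, P, Q the PID-type closed-loop matrices (A = [[0, I, 0], [0, 0, I], [0, −L_i I, −L_p I]], B₀ = [0; 0; B⁻¹], P = [[L_i²B + L_iL_pR, L_pL_iB + L_iR, L_iB], [L_pL_iB + L_iR, L_p²B + L_pR, L_pB], [L_iB, L_pB, B]], Q = blockdiag(L_i²R, (L_p²−2L_i)R, R)), for every x ∈ ℝ^{3n} and w ∈ ℝⁿ, setting τ̂ = −R B₀ᵀ P x and z = B₀ᵀ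 P x − R⁻¹ w, the exact identity 2 xᵀ P (A x + B₀ τ̂ + B₀ w) = −xᵀQx − zᵀRz + wᵀR⁻¹w holds; consequently 2 xᵀ P (A x + B₀ τ̂ + B₀ w) ≤ −λ_min(Q)‖x‖² + wᵀR⁻¹w, where λ_min(Q) > 0 is the smallest eigenvalue of Q. -/
open Matrix

def sub3 {n : ℕ} (i : Fin 3) (v : Fin 3 × Fin n → ℝ) : Fin n → ℝ := fun j => v (i, j)

lemma sub3_add {n : ℕ} (i : Fin 3) (v w : Fin 3 × Fin n → ℝ) :
    sub3 i (v + w) = sub3 i v + sub3 i w := rfl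

lemma blk3_mulVec_sub {n : ℕ} (M : Matrix (Fin 3) (Fin 3) (Matrix (Fin n) (Fin n) ℝ))
    (x : Fin 3 × Fin n → ℝ) (i : Fin 3) :
    sub3 i (blk3 M *ᵥ x) = M i 0 *ᵥ sub3 0 x + M i 1 *ᵥ sub3 1 x + M i 2 *ᵥ sub3 2 x := by
  funext j
  simp [sub3, blk3, Matrix.mulVec, dotProduct, Fintype.sum_prod_type, Fin.sum_univ_three]

lemma blkCol3_mulVec_sub {n : ℕ} (M : Fin 3 → Matrix (Fin n) (Fin n) ℝ)
    (w : Fin n → ℝ) (i : Fin 3) :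
    sub3 i (blkCol3 M *ᵥ w) = M i *ᵥ w := by
  funext j
  simp [sub3, blkCol3, Matrix.mulVec, dotProduct]

lemma blkCol3_transpose_mulVec {n : ℕ} (M : Fin 3 → Matrix (Fin n) (Fin n) ℝ)
    (v : Fin 3 × Fin n → ℝ) :
    (blkCol3 M)ᵀ *ᵥ v = (M 0)ᵀ *ᵥ sub3 0 v + (M 1)ᵀ *ᵥ sub3 1 v + (M 2)ᵀ *ᵥ sub3 2 v := by
  funext j
  simp [sub3, blkCol3, Matrix.mulVec, dotProduct, Matrix.transpose,
    Fintype.sum_prod_type, Fin.sum_univ_three]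

lemma dotProduct_sub3 {n : ℕ} (x v : Fin 3 × Fin n → ℝ) :
    x ⬝ᵥ v = sub3 0 x ⬝ᵥ sub3 0 v + sub3 1 x ⬝ᵥ sub3 1 v + sub3 2 x ⬝ᵥ sub3 2 v := by
  simp [sub3, dotProduct, Fintype.sum_prod_type, Fin.sum_univ_three]

lemma sub3_ne_zero {n : ℕ} {v : Fin 3 × Fin n → ℝ} {p : Fin 3 × Fin n} (h : v p ≠ 0) :
    sub3 p.1 v ≠ 0 := by
  intro hz
  exact h (by simpa [sub3] using congrFun hz p.2)

lemma rayleigh_min {m : Type*} [Fintype m] [DecidableEq m] [Nonempty m]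
    {M : Matrix m m ℝ} (hM : M.IsHermitian) (x : m → ℝ) :
    (⨅ i, hM.eigenvalues i) * (x ⬝ᵥ x) ≤ x ⬝ᵥ (M *ᵥ x) := by
  set U : Matrix m m ℝ := (hM.eigenvectorUnitary : Matrix m m ℝ) with hU
  have hstar : star U = Uᵀ := by ext i j; simp [Matrix.star_apply]
  have hUUt : U * Uᵀ = 1 := by
    have := Matrix.mem_unitaryGroup_iff.mp (hM.eigenvectorUnitary).2
    rwa [hstar] at this
  set y : m → ℝ := Uᵀ *ᵥ x with hy
  have hdot : ∀ z : m → ℝ, x ⬝ᵥ (U *ᵥ z) = y ⬝ᵥ z := by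
    intro z
    rw [hy, Matrix.mulVec_transpose, Matrix.dotProduct_mulVec]
  have hxx : x ⬝ᵥ x = y ⬝ᵥ y := by
    have : x ⬝ᵥ (U *ᵥ (Uᵀ *ᵥ x)) = y ⬝ᵥ y := hdot _
    rwa [Matrix.mulVec_mulVec, hUUt, Matrix.one_mulVec] at this
  have hofReal : (RCLike.ofReal ∘ hM.eigenvalues : m → ℝ) = hM.eigenvalues := by
    ext i; simp
  have hMx : x ⬝ᵥ (M *ᵥ x) = ∑ i, hM.eigenvalues i * (y i)^2 := by
    conv_lhs => rw [hM.spectral_theorem, Unitary.conjStarAlgAut_apply, ← hU]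
    rw [hstar, hofReal, ← Matrix.mulVec_mulVec, ← Matrix.mulVec_mulVec, hdot, ← hy]
    simp [dotProduct, Matrix.mulVec_diagonal, sq]
    exact Finset.sum_congr rfl fun i _ => by ring
  rw [hMx, hxx]
  have hb : BddBelow (Set.range hM.eigenvalues) := Finite.bddBelow_range _
  calc (⨅ i, hM.eigenvalues i) * (y ⬝ᵥ y)
      = ∑ i, (⨅ i, hM.eigenvalues i) * (y i)^2 := by
        simp [dotProduct, Finset.mul_sum, sq]
    _ ≤ ∑ i, hM.eigenvalues i * (y i)^2 := by
        refine Finset.sum_le_sum fun i _ => ?_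
        exact mul_le_mul_of_nonneg_right (ciInf_le hb i) (sq_nonneg _)

/-- Lemma 2 of the paper: along the PID-type closed-loop difference dynamics,
with `τ̂ = −R B₀ᵀ P x` and `z = B₀ᵀ P x − R⁻¹ w`, the Lyapunov derivative satisfies
`2 xᵀ P (A x + B₀ τ̂ + B₀ w) = −xᵀQx − zᵀRz + wᵀR⁻¹w ≤ −λ_min(Q)‖x‖² + wᵀR⁻¹w`,
with `λ_min(Q) > 0`. -/
theorem pid_lyapunov_derivative_bound
    (n : ℕ) (hn : 0 < n)
    (B : Matrix (Fin n) (Fin n) ℝ) (hBsymm : B.IsSymm) (hB : B.PosDef)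
    (L Lp Li : ℝ) (hL : 0 < L) (hLp : 0 < Lp) (hLi : 0 < Li) (hgain : Lp ^ 2 > 2 * Li)
    (R : Matrix (Fin n) (Fin n) ℝ) (hR : R = L • B)
    (A : Matrix (Fin 3 × Fin n) (Fin 3 × Fin n) ℝ)
    (hA : A = blk3 !![0, 1, 0; 0, 0, 1; 0, -(Li • 1), -(Lp • 1)])
    (B₀ : Matrix (Fin 3 × Fin n) (Fin n) ℝ)
    (hB₀ : B₀ = blkCol3 ![0, 0, B⁻¹])
    (P : Matrix (Fin 3 × Fin n) (Fin 3 × Fin n) ℝ)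
    (hP : P = blk3 !![Li ^ 2 • B + (Li * Lp) • R, (Lp * Li) • B + Li • R, Li • B;
                      (Lp * Li) • B + Li • R, Lp ^ 2 • B + Lp • R, Lp • B;
                      Li • B, Lp • B, B])
    (Q : Matrix (Fin 3 × Fin n) (Fin 3 × Fin n) ℝ)
    (hQ : Q = blk3 !![Li ^ 2 • R, 0, 0; 0, (Lp ^ 2 - 2 * Li) • R, 0; 0, 0, R]) :
    ∀ (x : Fin 3 × Fin n → ℝ) (w : Fin n → ℝ),
      (2 * (x ⬝ᵥ (P *ᵥ (A *ᵥ x + B₀ *ᵥ (-(R *ᵥ (B₀ᵀ *ᵥ (P *ᵥ x)))) + B₀ *ᵥ w))) =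
        -(x ⬝ᵥ (Q *ᵥ x)) - (B₀ᵀ *ᵥ (P *ᵥ x) - R⁻¹ *ᵥ w) ⬝ᵥ (R *ᵥ (B₀ᵀ *ᵥ (P *ᵥ x) - R⁻¹ *ᵥ w))
          + w ⬝ᵥ (R⁻¹ *ᵥ w)) ∧
      ∀ hQh : Q.IsHermitian,
        (0 < ⨅ i, hQh.eigenvalues i) ∧
        2 * (x ⬝ᵥ (P *ᵥ (A *ᵥ x + B₀ *ᵥ (-(R *ᵥ (B₀ᵀ *ᵥ (P *ᵥ x)))) + B₀ *ᵥ w))) ≤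
          -(⨅ i, hQh.eigenvalues i) * (x ⬝ᵥ x) + w ⬝ᵥ (R⁻¹ *ᵥ w) := by
  intro x w
  have hdet : IsUnit B.det := isUnit_iff_ne_zero.mpr hB.det_pos.ne'
  have hBinvB : B⁻¹ * B = 1 := Matrix.nonsing_inv_mul B hdet
  have hBBinv : B * B⁻¹ = 1 := Matrix.mul_nonsing_inv B hdet
  have hBinvT : B⁻¹ᵀ = B⁻¹ := by rw [Matrix.transpose_nonsing_inv, hBsymm]
  have hRinv : R⁻¹ = L⁻¹ • B⁻¹ := by
    rw [hR]
    refine Matrix.inv_eq_right_inv ?_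
    rw [smul_mul_smul_comm, hBBinv, mul_inv_cancel₀ hL.ne', one_smul]
  have symB : ∀ u v : Fin n → ℝ, (B *ᵥ u) ⬝ᵥ v = u ⬝ᵥ (B *ᵥ v) := by
    intro u v
    rw [dotProduct_comm, Matrix.dotProduct_mulVec, ← Matrix.mulVec_transpose, hBsymm,
      dotProduct_comm]
  have hBBiw : ∀ v : Fin n → ℝ, B *ᵥ (B⁻¹ *ᵥ v) = v := by
    intro v; rw [Matrix.mulVec_mulVec, hBBinv, Matrix.one_mulVec]
  have hBiB : ∀ v : Fin n → ℝ, B⁻¹ *ᵥ (B *ᵥ v) = v := by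
    intro v; rw [Matrix.mulVec_mulVec, hBinvB, Matrix.one_mulVec]
  -- symmetry normalizations
  have e10 : sub3 1 x ⬝ᵥ (B *ᵥ sub3 0 x) = sub3 0 x ⬝ᵥ (B *ᵥ sub3 1 x) := by
    rw [dotProduct_comm, symB]
  have e20 : sub3 2 x ⬝ᵥ (B *ᵥ sub3 0 x) = sub3 0 x ⬝ᵥ (B *ᵥ sub3 2 x) := by
    rw [dotProduct_comm, symB]
  have e21 : sub3 2 x ⬝ᵥ (B *ᵥ sub3 1 x) = sub3 1 x ⬝ᵥ (B *ᵥ sub3 2 x) := by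
    rw [dotProduct_comm, symB]
  have ewB : ∀ v : Fin n → ℝ, (B⁻¹ *ᵥ w) ⬝ᵥ (B *ᵥ v) = v ⬝ᵥ w := by
    intro v
    rw [dotProduct_comm, symB, hBBiw]
  have ews : (B⁻¹ *ᵥ w) ⬝ᵥ w = w ⬝ᵥ (B⁻¹ *ᵥ w) := dotProduct_comm _ _
  -- the key reduction of B₀ᵀ P x
  have hPx2 : sub3 2 (P *ᵥ x) = B *ᵥ (Li • sub3 0 x + Lp • sub3 1 x + sub3 2 x) := by
    rw [hP, blk3_mulVec_sub]
    simp only [Fin.isValue, Matrix.of_apply, Matrix.cons_val', Matrix.cons_val_zero,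
      Matrix.cons_val_one, Matrix.cons_val_two, Matrix.head_cons, Matrix.tail_cons,
      Matrix.empty_val', Matrix.cons_val_fin_one, Matrix.head_fin_const,
      Nat.succ_eq_add_one, Nat.reduceAdd]
    simp only [Matrix.mulVec_add, Matrix.mulVec_smul, Matrix.smul_mulVec]
  have h_tau : B₀ᵀ *ᵥ (P *ᵥ x) = Li • sub3 0 x + Lp • sub3 1 x + sub3 2 x := by
    rw [hB₀, blkCol3_transpose_mulVec]
    simp only [Fin.isValue, Matrix.cons_val_zero, Matrix.cons_val_one, Matrix.cons_val_two,
      Matrix.head_cons, Matrix.tail_cons, Matrix.transpose_zero, Matrix.zero_mulVec, zero_add,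
      Nat.succ_eq_add_one, Nat.reduceAdd]
    rw [hBinvT, hPx2, hBiB]
  -- blocks of the closed-loop vector u
  have hu0 : sub3 0 (A *ᵥ x + B₀ *ᵥ (-(R *ᵥ (Li • sub3 0 x + Lp • sub3 1 x + sub3 2 x)))
      + B₀ *ᵥ w) = sub3 1 x := by
    rw [sub3_add, sub3_add, hA, hB₀, blk3_mulVec_sub, blkCol3_mulVec_sub, blkCol3_mulVec_sub]
    simp only [Fin.isValue, Matrix.of_apply, Matrix.cons_val', Matrix.cons_val_zero,
      Matrix.cons_val_one, Matrix.cons_val_two, Matrix.head_cons, Matrix.tail_cons,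
      Matrix.empty_val', Matrix.cons_val_fin_one, Matrix.head_fin_const,
      Nat.succ_eq_add_one, Nat.reduceAdd, Matrix.zero_mulVec, Matrix.one_mulVec,
      zero_add, add_zero]
  have hu1 : sub3 1 (A *ᵥ x + B₀ *ᵥ (-(R *ᵥ (Li • sub3 0 x + Lp • sub3 1 x + sub3 2 x)))
      + B₀ *ᵥ w) = sub3 2 x := by
    rw [sub3_add, sub3_add, hA, hB₀, blk3_mulVec_sub, blkCol3_mulVec_sub, blkCol3_mulVec_sub]
    simp only [Fin.isValue, Matrix.of_apply, Matrix.cons_val', Matrix.cons_val_zero,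
      Matrix.cons_val_one, Matrix.cons_val_two, Matrix.head_cons, Matrix.tail_cons,
      Matrix.empty_val', Matrix.cons_val_fin_one, Matrix.head_fin_const,
      Nat.succ_eq_add_one, Nat.reduceAdd, Matrix.zero_mulVec, Matrix.one_mulVec,
      zero_add, add_zero]
  have hu2 : sub3 2 (A *ᵥ x + B₀ *ᵥ (-(R *ᵥ (Li • sub3 0 x + Lp • sub3 1 x + sub3 2 x)))
      + B₀ *ᵥ w) =
      -(Li • sub3 1 x) + -(Lp • sub3 2 x)
        + -(L • (Li • sub3 0 x + Lp • sub3 1 x + sub3 2 x)) + B⁻¹ *ᵥ w := by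
    rw [sub3_add, sub3_add, hA, hB₀, blk3_mulVec_sub, blkCol3_mulVec_sub, blkCol3_mulVec_sub]
    simp only [Fin.isValue, Matrix.of_apply, Matrix.cons_val', Matrix.cons_val_zero,
      Matrix.cons_val_one, Matrix.cons_val_two, Matrix.head_cons, Matrix.tail_cons,
      Matrix.empty_val', Matrix.cons_val_fin_one, Matrix.head_fin_const,
      Nat.succ_eq_add_one, Nat.reduceAdd, Matrix.zero_mulVec, Matrix.one_mulVec,
      zero_add, add_zero]
    rw [hR]
    simp only [Matrix.neg_mulVec, Matrix.mulVec_neg, Matrix.smul_mulVec,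
      Matrix.mulVec_smul, Matrix.one_mulVec, hBiB]
  -- nonnegativity of the R-quadratic form
  have hRnonneg : ∀ v : Fin n → ℝ, 0 ≤ v ⬝ᵥ (R *ᵥ v) := by
    intro v
    rw [hR, Matrix.smul_mulVec, dotProduct_smul, smul_eq_mul]
    exact mul_nonneg hL.le (by simpa using hB.posSemidef.dotProduct_mulVec_nonneg v)
  -- the exact identity
  have hident : 2 * (x ⬝ᵥ (P *ᵥ (A *ᵥ x + B₀ *ᵥ (-(R *ᵥ (B₀ᵀ *ᵥ (P *ᵥ x)))) + B₀ *ᵥ w))) =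
      -(x ⬝ᵥ (Q *ᵥ x)) - (B₀ᵀ *ᵥ (P *ᵥ x) - R⁻¹ *ᵥ w) ⬝ᵥ (R *ᵥ (B₀ᵀ *ᵥ (P *ᵥ x) - R⁻¹ *ᵥ w))
        + w ⬝ᵥ (R⁻¹ *ᵥ w) := by
    rw [h_tau, hRinv]
    rw [dotProduct_sub3 x (P *ᵥ _), dotProduct_sub3 x (Q *ᵥ _)]
    rw [hP, hQ]
    simp only [blk3_mulVec_sub]
    simp only [Fin.isValue, Matrix.of_apply, Matrix.cons_val', Matrix.cons_val_zero,
      Matrix.cons_val_one, Matrix.cons_val_two, Matrix.head_cons, Matrix.tail_cons,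
      Matrix.empty_val', Matrix.cons_val_fin_one, Matrix.head_fin_const,
      Nat.succ_eq_add_one, Nat.reduceAdd]
    simp only [hu0, hu1, hu2]
    rw [hR]
    simp only [Matrix.add_mulVec, Matrix.smul_mulVec, Matrix.mulVec_add,
      Matrix.mulVec_smul, Matrix.mulVec_neg, Matrix.neg_mulVec, Matrix.zero_mulVec,
      Matrix.one_mulVec, Matrix.mulVec_sub, Matrix.sub_mulVec, hBBiw, zero_add, add_zero,
      smul_neg, smul_smul]
    simp only [dotProduct_add, add_dotProduct, dotProduct_sub,
      sub_dotProduct, dotProduct_neg, neg_dotProduct,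
      dotProduct_smul, smul_dotProduct, smul_eq_mul]
    simp only [e10, e20, e21, ewB, ews]
    field_simp
    ring
  refine ⟨hident, ?_⟩
  intro hQh
  haveI : Nonempty (Fin n) := ⟨⟨0, hn⟩⟩
  -- Q is positive definite
  have hQval : ∀ v : Fin 3 × Fin n → ℝ, v ⬝ᵥ (Q *ᵥ v) =
      (Li ^ 2 * L) * (sub3 0 v ⬝ᵥ (B *ᵥ sub3 0 v))
      + ((Lp ^ 2 - 2 * Li) * L) * (sub3 1 v ⬝ᵥ (B *ᵥ sub3 1 v))
      + L * (sub3 2 v ⬝ᵥ (B *ᵥ sub3 2 v)) := by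
    intro v
    rw [dotProduct_sub3 v, hQ]
    simp only [blk3_mulVec_sub]
    simp only [Fin.isValue, Matrix.of_apply, Matrix.cons_val', Matrix.cons_val_zero,
      Matrix.cons_val_one, Matrix.cons_val_two, Matrix.head_cons, Matrix.tail_cons,
      Matrix.empty_val', Matrix.cons_val_fin_one, Matrix.head_fin_const,
      Nat.succ_eq_add_one, Nat.reduceAdd, Matrix.zero_mulVec, zero_add, add_zero]
    rw [hR]
    simp only [Matrix.smul_mulVec, dotProduct_smul, smul_smul, smul_eq_mul]
  have hBq : ∀ v : Fin n → ℝ, 0 ≤ v ⬝ᵥ (B *ᵥ v) := fun v => by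
    simpa using hB.posSemidef.dotProduct_mulVec_nonneg v
  have hBqpos : ∀ v : Fin n → ℝ, v ≠ 0 → 0 < v ⬝ᵥ (B *ᵥ v) := fun v hv => by
    simpa using hB.dotProduct_mulVec_pos hv
  have hc1 : 0 < Li ^ 2 * L := by positivity
  have hc2 : 0 < (Lp ^ 2 - 2 * Li) * L := by
    have : 0 < Lp ^ 2 - 2 * Li := by linarith
    positivity
  have hQpos : Q.PosDef := by
    refine Matrix.PosDef.of_dotProduct_mulVec_pos hQh fun v hv => ?_
    have hv' : ∃ p, v p ≠ 0 := Function.ne_iff.mp hv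
    obtain ⟨p, hp⟩ := hv'
    have hval := hQval v
    have h0 : 0 ≤ (Li ^ 2 * L) * (sub3 0 v ⬝ᵥ (B *ᵥ sub3 0 v)) :=
      mul_nonneg hc1.le (hBq _)
    have h1 : 0 ≤ ((Lp ^ 2 - 2 * Li) * L) * (sub3 1 v ⬝ᵥ (B *ᵥ sub3 1 v)) :=
      mul_nonneg hc2.le (hBq _)
    have h2 : 0 ≤ L * (sub3 2 v ⬝ᵥ (B *ᵥ sub3 2 v)) :=
      mul_nonneg hL.le (hBq _)
    have hsub := sub3_ne_zero hp
    have : 0 < v ⬝ᵥ (Q *ᵥ v) := by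
      rw [hval]
      obtain ⟨i, j⟩ := p
      fin_cases i
      · have hp0 : 0 < sub3 0 v ⬝ᵥ (B *ᵥ sub3 0 v) := hBqpos _ hsub
        have := mul_pos hc1 hp0; linarith
      · have hp1 : 0 < sub3 1 v ⬝ᵥ (B *ᵥ sub3 1 v) := hBqpos _ hsub
        have := mul_pos hc2 hp1; linarith
      · have hp2 : 0 < sub3 2 v ⬝ᵥ (B *ᵥ sub3 2 v) := hBqpos _ hsub
        have := mul_pos hL hp2; linarith
    simpa using this
  have heig : ∀ i, 0 < hQh.eigenvalues i := fun i => hQpos.eigenvalues_pos i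
  obtain ⟨i₀, hi₀⟩ := Finite.exists_min hQh.eigenvalues
  have hinf_pos : 0 < ⨅ i, hQh.eigenvalues i :=
    lt_of_lt_of_le (heig i₀) (le_ciInf hi₀)
  refine ⟨hinf_pos, ?_⟩
  rw [hident]
  have hray := rayleigh_min hQh x
  have hz := hRnonneg (B₀ᵀ *ᵥ (P *ᵥ x) - R⁻¹ *ᵥ w)
  linarith
end

section
/- Let B be a symmetric positive definite n×n real matrix, let L, L_p, L_i > 0 be real scalars with L_p² > 2L_i, and set R = L·B. With A, B₀, P, Q the PID-type closed-loop matrices (A = [[0, I, 0], [0, 0, I], [0, −L_i I, −L_p I]], B₀ = [0; 0; B⁻¹], P and Q as in the Riccati identity), the closed-loop system matrix A_cl = A − B₀ R B₀ᵀ P satisfies the Lyapunov equation A_clᵀ P + P A_cl = −(Q + P B₀ R B₀ᵀ P), and the right-hand side −(Q + P B₀ R B₀ᵀ P) is negative definite. -/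
open Matrix

lemma blk3_mul {n : ℕ} (M N : Matrix (Fin 3) (Fin 3) (Matrix (Fin n) (Fin n) ℝ)) :
    blk3 M * blk3 N = blk3 (M * N) := by
  ext ⟨i, a⟩ ⟨k, c⟩
  simp [blk3, Matrix.mul_apply, Fintype.sum_prod_type, Matrix.sum_apply]

lemma blk3_add {n : ℕ} (M N : Matrix (Fin 3) (Fin 3) (Matrix (Fin n) (Fin n) ℝ)) :
    blk3 M + blk3 N = blk3 (M + N) := by
  ext ⟨i, a⟩ ⟨k, c⟩; simp [blk3]

lemma blk3_sub {n : ℕ} (M N : Matrix (Fin 3) (Fin 3) (Matrix (Fin n) (Fin n) ℝ)) :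
    blk3 M - blk3 N = blk3 (M - N) := by
  ext ⟨i, a⟩ ⟨k, c⟩; simp [blk3]

lemma blk3_neg {n : ℕ} (M : Matrix (Fin 3) (Fin 3) (Matrix (Fin n) (Fin n) ℝ)) :
    -blk3 M = blk3 (-M) := by
  ext ⟨i, a⟩ ⟨k, c⟩; simp [blk3]

lemma blk3_transpose {n : ℕ} (M : Matrix (Fin 3) (Fin 3) (Matrix (Fin n) (Fin n) ℝ)) :
    (blk3 M)ᵀ = blk3 (Matrix.of fun i j => (M j i)ᵀ) := by
  ext ⟨i, a⟩ ⟨k, c⟩; simp [blk3]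

lemma blkCol3_mul {n : ℕ} (v : Fin 3 → Matrix (Fin n) (Fin n) ℝ)
    (W : Matrix (Fin n) (Fin n) ℝ) :
    blkCol3 v * W = blkCol3 (fun i => v i * W) := by
  ext ⟨i, a⟩ j; simp [blkCol3, Matrix.mul_apply]

lemma blkCol3_mul_transpose {n : ℕ} (v w : Fin 3 → Matrix (Fin n) (Fin n) ℝ) :
    blkCol3 v * (blkCol3 w)ᵀ = blk3 (Matrix.of fun i j => v i * (w j)ᵀ) := by
  ext ⟨i, a⟩ ⟨k, c⟩; simp [blkCol3, blk3, Matrix.mul_apply]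

lemma posDef_smul {n : ℕ} {M : Matrix (Fin n) (Fin n) ℝ} (hM : M.PosDef)
    {c : ℝ} (hc : 0 < c) : (c • M).PosDef := by
  refine Matrix.PosDef.of_dotProduct_mulVec_pos ?_ (fun x hx => ?_)
  · unfold Matrix.IsHermitian
    rw [conjTranspose_smul, hM.isHermitian.eq]
    simp
  · rw [smul_mulVec, dotProduct_smul, smul_eq_mul]
    exact mul_pos hc (hM.dotProduct_mulVec_pos hx)

lemma blk3_diag_posDef {n : ℕ} {q0 q1 q2 : Matrix (Fin n) (Fin n) ℝ}
    (h0 : q0.PosDef) (h1 : q1.PosDef) (h2 : q2.PosDef) :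
    (blk3 !![q0, 0, 0; 0, q1, 0; 0, 0, q2]).PosDef := by
  have hq0 : ∀ a b, q0 b a = q0 a b := fun a b => by simpa using h0.isHermitian.apply a b
  have hq1 : ∀ a b, q1 b a = q1 a b := fun a b => by simpa using h1.isHermitian.apply a b
  have hq2 : ∀ a b, q2 b a = q2 a b := fun a b => by simpa using h2.isHermitian.apply a b
  refine Matrix.PosDef.of_dotProduct_mulVec_pos ?_ (fun x hx => ?_)
  · ext ⟨i, a⟩ ⟨j, b⟩
    fin_cases i <;> fin_cases j <;>
      simp [blk3, Matrix.conjTranspose_apply, Matrix.vecHead, Matrix.vecTail, hq0, hq1, hq2]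
  · have key : dotProduct (star x) ((blk3 !![q0, 0, 0; 0, q1, 0; 0, 0, q2]) *ᵥ x)
        = dotProduct (star fun a => x (0, a)) (q0 *ᵥ fun a => x (0, a))
          + dotProduct (star fun a => x (1, a)) (q1 *ᵥ fun a => x (1, a))
          + dotProduct (star fun a => x (2, a)) (q2 *ᵥ fun a => x (2, a)) := by
      simp [dotProduct, Matrix.mulVec, blk3, Fintype.sum_prod_type, Fin.sum_univ_three, Matrix.vecHead, Matrix.vecTail]
    rw [key]
    obtain ⟨⟨i, a⟩, hxa⟩ := Function.ne_iff.mp hx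
    have t0 := h0.posSemidef.dotProduct_mulVec_nonneg fun a => x (0, a)
    have t1 := h1.posSemidef.dotProduct_mulVec_nonneg fun a => x (1, a)
    have t2 := h2.posSemidef.dotProduct_mulVec_nonneg fun a => x (2, a)
    fin_cases i
    · have : (fun a => x (0, a)) ≠ 0 := fun h => hxa (by simpa using congrFun h a)
      have := h0.dotProduct_mulVec_pos this; linarith
    · have : (fun a => x (1, a)) ≠ 0 := fun h => hxa (by simpa using congrFun h a)
      have := h1.dotProduct_mulVec_pos this; linarith
    · have : (fun a => x (2, a)) ≠ 0 := fun h => hxa (by simpa using congrFun h a)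
      have := h2.dotProduct_mulVec_pos this; linarith

lemma lyap_pos {m : Type*} [Fintype m] {Qm Pm Sm : Matrix m m ℝ}
    (hQ : Qm.PosDef) (hS : Sm.PosSemidef) (hPsymm : Pmᵀ = Pm) :
    (Qm + Pm * Sm * Pm).PosDef := by
  have h := hS.mul_mul_conjTranspose_same Pm
  rw [conjTranspose_eq_transpose_of_trivial, hPsymm] at h
  exact hQ.add_posSemidef h

set_option maxHeartbeats 2000000 in
/-- Requirement 1) of Theorem 1 for the PID-type observer: the closed-loop matrix
`A_cl = A − B₀ R B₀ᵀ P` satisfies the Lyapunov equation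
`A_clᵀ P + P A_cl = −(Q + P B₀ R B₀ᵀ P)`, whose right-hand side is negative definite. -/
theorem pid_closed_loop_lyapunov_equation
    (n : ℕ) (B : Matrix (Fin n) (Fin n) ℝ) (hBsymm : B.IsSymm) (hB : B.PosDef)
    (L Lp Li : ℝ) (hL : 0 < L) (hLp : 0 < Lp) (hLi : 0 < Li) (hgain : Lp ^ 2 > 2 * Li)
    (R : Matrix (Fin n) (Fin n) ℝ) (hR : R = L • B)
    (A : Matrix (Fin 3 × Fin n) (Fin 3 × Fin n) ℝ)
    (hA : A = blk3 !![0, 1, 0; 0, 0, 1; 0, -(Li • 1), -(Lp • 1)])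
    (B₀ : Matrix (Fin 3 × Fin n) (Fin n) ℝ)
    (hB₀ : B₀ = blkCol3 ![0, 0, B⁻¹])
    (P : Matrix (Fin 3 × Fin n) (Fin 3 × Fin n) ℝ)
    (hP : P = blk3 !![Li ^ 2 • B + (Li * Lp) • R, (Lp * Li) • B + Li • R, Li • B;
                      (Lp * Li) • B + Li • R, Lp ^ 2 • B + Lp • R, Lp • B;
                      Li • B, Lp • B, B])
    (Q : Matrix (Fin 3 × Fin n) (Fin 3 × Fin n) ℝ)
    (hQ : Q = blk3 !![Li ^ 2 • R, 0, 0; 0, (Lp ^ 2 - 2 * Li) • R, 0; 0, 0, R])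
    (Acl : Matrix (Fin 3 × Fin n) (Fin 3 × Fin n) ℝ)
    (hAcl : Acl = A - B₀ * R * B₀ᵀ * P) :
    Aclᵀ * P + P * Acl = -(Q + P * B₀ * R * B₀ᵀ * P) ∧
      (Q + P * B₀ * R * B₀ᵀ * P).PosDef := by
  subst hR hA hB₀ hP hQ hAcl
  have hdet : IsUnit B.det := hB.det_pos.ne'.isUnit
  have hBi : B⁻¹ * B = 1 := nonsing_inv_mul B hdet
  have hBi' : B * B⁻¹ = 1 := mul_nonsing_inv B hdet
  have hBit : B⁻¹ᵀ = B⁻¹ := by rw [transpose_nonsing_inv, hBsymm.eq]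
  have hS : blkCol3 ![0, 0, B⁻¹] * (L • B) * (blkCol3 ![0, 0, B⁻¹])ᵀ
      = blk3 !![0, 0, 0; 0, 0, 0; 0, 0, L • B⁻¹] := by
    rw [blkCol3_mul, blkCol3_mul_transpose]
    refine congrArg blk3 ?_
    ext i j
    fin_cases i <;> fin_cases j <;>
      simp [Matrix.vecHead, Matrix.vecTail, hBit, Matrix.mul_smul, Matrix.smul_mul, hBi]
  have hBe : ∀ a b, B b a = B a b := fun a b => (congrFun (congrFun hBsymm a) b : _)
  have reassoc : ∀ X : Matrix (Fin 3 × Fin n) (Fin 3 × Fin n) ℝ,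
      X * blkCol3 ![0, 0, B⁻¹] * (L • B) * (blkCol3 ![0, 0, B⁻¹])ᵀ
        = X * (blkCol3 ![0, 0, B⁻¹] * (L • B) * (blkCol3 ![0, 0, B⁻¹])ᵀ) :=
    fun X => by simp [Matrix.mul_assoc]
  rw [reassoc, hS]
  constructor
  · simp only [blk3_mul, blk3_sub, blk3_add, blk3_neg, blk3_transpose]
    refine congrArg blk3 ?_
    ext i j
    fin_cases i <;> fin_cases j <;>
      (simp [Matrix.mul_apply, Fin.sum_univ_three, Matrix.vecHead, Matrix.vecTail,
        Matrix.transpose_add, Matrix.transpose_smul,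
        hBsymm.eq, hBi, hBi', hBit, Matrix.mul_smul, Matrix.smul_mul,
        Matrix.mul_add, Matrix.add_mul, smul_smul, smul_add, Matrix.one_apply,
        mul_ite, ite_mul, Finset.sum_ite_eq, Finset.sum_ite_eq', mul_sub, sub_mul,
        Finset.mul_sum] <;>
       try ring)
  · refine lyap_pos (blk3_diag_posDef
      (posDef_smul (posDef_smul hB hL) (by positivity))
      (posDef_smul (posDef_smul hB hL) (by nlinarith)) (posDef_smul hB hL)) ?_ ?_
    · rw [← hS, ← conjTranspose_eq_transpose_of_trivial]
      exact (posDef_smul hB hL).posSemidef.mul_mul_conjTranspose_same _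
    · rw [blk3_transpose]
      refine congrArg blk3 ?_
      ext i j
      fin_cases i <;> fin_cases j <;>
        simp [Matrix.vecHead, Matrix.vecTail, hBsymm.eq, Matrix.transpose_add,
          Matrix.transpose_smul, hBe]
end

section
/- Let B be a symmetric positive definite n×n real matrix, L, L_p, L_i > 0 real scalars, R = L·B, and let A = [[0, I, 0], [0, 0, I], [0, −L_i I, −L_p I]], B₀ = [0; 0; B⁻¹], and τ̂(x) = −R(x₃ + L_p x₂ + L_i x₁) for x = (x₁, x₂, x₃) ∈ ℝ^{3n}. Then for every constant τ̄ ∈ ℝⁿ and constant perturbation w̄ = −τ̄ + L_p B x₃ + L_i B x₂, the equilibrium equation A x + B₀ τ̂(x) + B₀ w̄ = 0 has the unique solution x₂ = 0, x₃ = 0, and x₁ = −(L L_i)⁻¹ B⁻¹ τ̄; at this equilibrium the observer output equals the steady-state friction, τ̂(x) = τ̄. -/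
open Matrix

lemma blk3_mulVec {n : ℕ} (M : Matrix (Fin 3) (Fin 3) (Matrix (Fin n) (Fin n) ℝ))
    (x₁ x₂ x₃ : Fin n → ℝ) :
    blk3 M *ᵥ stack3 x₁ x₂ x₃ =
      stack3 (M 0 0 *ᵥ x₁ + M 0 1 *ᵥ x₂ + M 0 2 *ᵥ x₃)
             (M 1 0 *ᵥ x₁ + M 1 1 *ᵥ x₂ + M 1 2 *ᵥ x₃)
             (M 2 0 *ᵥ x₁ + M 2 1 *ᵥ x₂ + M 2 2 *ᵥ x₃) := by
  funext ⟨i, k⟩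
  fin_cases i <;>
    simp [blk3, stack3, mulVec, dotProduct, Fintype.sum_prod_type, Fin.sum_univ_three]

lemma blkCol3_mulVec {n : ℕ} (M : Fin 3 → Matrix (Fin n) (Fin n) ℝ) (v : Fin n → ℝ) :
    blkCol3 M *ᵥ v = stack3 (M 0 *ᵥ v) (M 1 *ᵥ v) (M 2 *ᵥ v) := by
  funext ⟨i, k⟩
  fin_cases i <;> simp [blkCol3, stack3, mulVec, dotProduct]

lemma stack3_add {n : ℕ} (a b c d e f : Fin n → ℝ) :
    stack3 a b c + stack3 d e f = stack3 (a + d) (b + e) (c + f) := by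
  funext ⟨i, k⟩
  fin_cases i <;> simp [stack3]

lemma stack3_eq_zero {n : ℕ} (a b c : Fin n → ℝ) :
    stack3 a b c = 0 ↔ a = 0 ∧ b = 0 ∧ c = 0 := by
  constructor
  · intro h
    refine ⟨?_, ?_, ?_⟩ <;> funext k
    · exact congrFun h (0, k)
    · exact congrFun h (1, k)
    · exact congrFun h (2, k)
  · rintro ⟨ha, hb, hc⟩
    funext ⟨i, k⟩
    subst ha hb hc
    fin_cases i <;> rfl



/-- Uniqueness of the equilibrium for the PID-type friction observer with constant
steady-state friction `τ̄`: the equilibrium equation `A x + B₀ τ̂(x) + B₀ w̄ = 0`,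
with `τ̂(x) = −R(x₃ + L_p x₂ + L_i x₁)` and `w̄ = −τ̄ + L_p B x₃ + L_i B x₂`, holds iff
`x₂ = 0`, `x₃ = 0`, `x₁ = −(L L_i)⁻¹ B⁻¹ τ̄`; and at equilibrium `τ̂(x) = τ̄`. -/
theorem pid_unique_equilibrium
    (n : ℕ) (B : Matrix (Fin n) (Fin n) ℝ) (hBsymm : B.IsSymm) (hB : B.PosDef)
    (L Lp Li : ℝ) (hL : 0 < L) (hLp : 0 < Lp) (hLi : 0 < Li)
    (R : Matrix (Fin n) (Fin n) ℝ) (hR : R = L • B)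
    (A : Matrix (Fin 3 × Fin n) (Fin 3 × Fin n) ℝ)
    (hA : A = blk3 !![0, 1, 0; 0, 0, 1; 0, -(Li • 1), -(Lp • 1)])
    (B₀ : Matrix (Fin 3 × Fin n) (Fin n) ℝ)
    (hB₀ : B₀ = blkCol3 ![0, 0, B⁻¹]) :
    ∀ (τ' x₁ x₂ x₃ : Fin n → ℝ),
      (A *ᵥ stack3 x₁ x₂ x₃ + B₀ *ᵥ (-(R *ᵥ (x₃ + Lp • x₂ + Li • x₁)))
          + B₀ *ᵥ (-τ' + Lp • (B *ᵥ x₃) + Li • (B *ᵥ x₂)) = 0 ↔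
        x₂ = 0 ∧ x₃ = 0 ∧ x₁ = -((L * Li)⁻¹ • (B⁻¹ *ᵥ τ'))) ∧
      (A *ᵥ stack3 x₁ x₂ x₃ + B₀ *ᵥ (-(R *ᵥ (x₃ + Lp • x₂ + Li • x₁)))
          + B₀ *ᵥ (-τ' + Lp • (B *ᵥ x₃) + Li • (B *ᵥ x₂)) = 0 →
        -(R *ᵥ (x₃ + Lp • x₂ + Li • x₁)) = τ') := by
  intro τ' x₁ x₂ x₃
  have hdet : IsUnit B.det := isUnit_iff_ne_zero.mpr hB.det_pos.ne'
  have hinv : B⁻¹ * B = 1 := Matrix.nonsing_inv_mul B hdet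
  have hinv' : B * B⁻¹ = 1 := Matrix.mul_nonsing_inv B hdet
  have hLLi : (L * Li) ≠ 0 := by positivity
  -- at the claimed equilibrium point the observer output is exactly τ'
  have hout : -(R *ᵥ (Li • (-((L * Li)⁻¹ • (B⁻¹ *ᵥ τ'))))) = τ' := by
    rw [hR]
    rw [smul_neg, smul_smul, mulVec_neg, neg_neg, smul_mulVec, mulVec_smul,
      mulVec_mulVec, hinv', one_mulVec, smul_smul]
    rw [show L * (Li * (L * Li)⁻¹) = 1 by field_simp]
    simp
  -- rewrite the equation componentwise
  have key : (A *ᵥ stack3 x₁ x₂ x₃ + B₀ *ᵥ (-(R *ᵥ (x₃ + Lp • x₂ + Li • x₁)))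
          + B₀ *ᵥ (-τ' + Lp • (B *ᵥ x₃) + Li • (B *ᵥ x₂)) = 0) ↔
      (x₂ = 0 ∧ x₃ = 0 ∧
        (-(Li • x₂) - Lp • x₃) + (B⁻¹ *ᵥ (-(R *ᵥ (x₃ + Lp • x₂ + Li • x₁))))
          + (B⁻¹ *ᵥ (-τ' + Lp • (B *ᵥ x₃) + Li • (B *ᵥ x₂))) = 0) := by
    rw [hA, hB₀, blk3_mulVec, blkCol3_mulVec, blkCol3_mulVec, stack3_add, stack3_add,
      stack3_eq_zero]
    constructor
    · rintro ⟨h1, h2, h3⟩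
      refine ⟨?_, ?_, ?_⟩
      · simpa [vecHead, vecTail] using h1
      · simpa [vecHead, vecTail] using h2
      · simpa [vecHead, vecTail, sub_eq_add_neg, add_assoc, neg_mulVec,
          smul_mulVec, one_mulVec] using h3
    · rintro ⟨h1, h2, h3⟩
      refine ⟨?_, ?_, ?_⟩
      · simpa [vecHead, vecTail] using h1
      · simpa [vecHead, vecTail] using h2
      · simpa [vecHead, vecTail, sub_eq_add_neg, add_assoc, neg_mulVec,
          smul_mulVec, one_mulVec] using h3
  -- with x₂ = x₃ = 0, the third component determines x₁
  have third : ∀ (h2 : x₂ = 0) (h3 : x₃ = 0),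
      ((-(Li • x₂) - Lp • x₃) + (B⁻¹ *ᵥ (-(R *ᵥ (x₃ + Lp • x₂ + Li • x₁))))
          + (B⁻¹ *ᵥ (-τ' + Lp • (B *ᵥ x₃) + Li • (B *ᵥ x₂))) = 0) →
      x₁ = -((L * Li)⁻¹ • (B⁻¹ *ᵥ τ')) := by
    intro h2 h3 hc
    subst h2 h3
    simp only [smul_zero, neg_zero, zero_sub, mulVec_zero, add_zero, zero_add,
      smul_zero, sub_zero] at hc
    -- hc : B⁻¹ *ᵥ (-(R *ᵥ (Li • x₁))) + B⁻¹ *ᵥ (-τ') = 0 (up to zero terms)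
    have hc' : B *ᵥ ((B⁻¹ *ᵥ (-(R *ᵥ (0 + 0 + Li • x₁)))) + (B⁻¹ *ᵥ (-τ' + 0 + 0))) = 0 := by
      simp only [zero_add, add_zero]
      rw [hc]; simp
    rw [mulVec_add, mulVec_mulVec, mulVec_mulVec, hinv', one_mulVec, one_mulVec] at hc'
    simp only [zero_add, add_zero] at hc'
    rw [hR, smul_mulVec, mulVec_smul] at hc'
    -- hc' : -(L • Li • (B *ᵥ x₁)) + -τ' = 0
    have hBx : B *ᵥ x₁ = (L * Li)⁻¹ • (-τ') := by
      have h1 : (L * Li) • (B *ᵥ x₁) = -τ' := by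
        have := hc'
        have h2 : L • Li • (B *ᵥ x₁) = -τ' := by linear_combination (norm := module) -this
        rw [← h2, smul_smul]
      rw [← h1, smul_smul, inv_mul_cancel₀ hLLi, one_smul]
    have : x₁ = B⁻¹ *ᵥ (B *ᵥ x₁) := by rw [mulVec_mulVec, hinv, one_mulVec]
    rw [this, hBx, mulVec_smul, mulVec_neg]
    module
  refine ⟨?_, ?_⟩
  · rw [key]
    constructor
    · rintro ⟨h2, h3, hc⟩
      exact ⟨h2, h3, third h2 h3 hc⟩
    · rintro ⟨h2, h3, h1⟩
      subst h2 h3 h1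
      refine ⟨rfl, rfl, ?_⟩
      simp only [smul_zero, neg_zero, zero_sub, mulVec_zero, add_zero, zero_add,
        smul_zero, sub_zero]
      rw [hout]
      simp [mulVec_add, mulVec_neg]
  · intro h
    rw [key] at h
    obtain ⟨h2, h3, hc⟩ := h
    have h1 := third h2 h3 hc
    subst h2 h3 h1
    simp only [smul_zero, zero_add]
    exact hout
end

section
/- Let B be a symmetric positive definite n×n real matrix, let L, L_p > 0 be real scalars, and set R = L·B. Define the 2n×2n block matrices A = [[0, I], [0, −L_p·I]], the 2n×n matrix B₀ = [0; B⁻¹], P = [[L_p²·B + L_p·R, L_p·B], [L_p·B, B]], and Q = blockdiag(L_p²·R, R). Then the algebraic Riccati equation AᵀP + PA − P B₀ R B₀ᵀ P + Q = 0 holds. -/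
open Matrix

/-- A `2×1` block column matrix with `n×n` blocks. -/
def blkCol2 {n : ℕ} (M : Fin 2 → Matrix (Fin n) (Fin n) ℝ) :
    Matrix (Fin 2 × Fin n) (Fin n) ℝ :=
  Matrix.of fun p j => M p.1 p.2 j

def blkRow2 {n : ℕ} (M : Fin 2 → Matrix (Fin n) (Fin n) ℝ) :
    Matrix (Fin n) (Fin 2 × Fin n) ℝ :=
  Matrix.of fun j p => M p.1 j p.2

variable {n : ℕ}

lemma blk2_mul (M N : Matrix (Fin 2) (Fin 2) (Matrix (Fin n) (Fin n) ℝ)) :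
    blk2 M * blk2 N = blk2 (M * N) := by
  ext ⟨i, a⟩ ⟨j, b⟩
  simp [blk2, Matrix.mul_apply, Fintype.sum_prod_type, Matrix.sum_apply]

lemma blk2_transpose (M : Matrix (Fin 2) (Fin 2) (Matrix (Fin n) (Fin n) ℝ)) :
    (blk2 M)ᵀ = blk2 (Matrix.of fun i j => (M j i)ᵀ) := by
  ext ⟨i, a⟩ ⟨j, b⟩
  simp [blk2]

lemma blk2_mul_col (M : Matrix (Fin 2) (Fin 2) (Matrix (Fin n) (Fin n) ℝ))
    (v : Fin 2 → Matrix (Fin n) (Fin n) ℝ) :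
    blk2 M * blkCol2 v = blkCol2 (M *ᵥ v) := by
  ext ⟨i, a⟩ b
  simp [blk2, blkCol2, Matrix.mul_apply, Matrix.mulVec, dotProduct,
    Fintype.sum_prod_type, Matrix.sum_apply]

lemma col_mul (v : Fin 2 → Matrix (Fin n) (Fin n) ℝ) (C : Matrix (Fin n) (Fin n) ℝ) :
    blkCol2 v * C = blkCol2 (fun i => v i * C) := by
  ext ⟨i, a⟩ b
  simp [blkCol2, Matrix.mul_apply]

lemma col_transpose (v : Fin 2 → Matrix (Fin n) (Fin n) ℝ) :
    (blkCol2 v)ᵀ = blkRow2 (fun i => (v i)ᵀ) := by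
  ext a ⟨i, b⟩
  simp [blkCol2, blkRow2]

lemma col_mul_row (u w : Fin 2 → Matrix (Fin n) (Fin n) ℝ) :
    blkCol2 u * blkRow2 w = blk2 (Matrix.of fun i j => u i * w j) := by
  ext ⟨i, a⟩ ⟨j, b⟩
  simp [blkCol2, blkRow2, blk2, Matrix.mul_apply]

lemma blk2_add (M N : Matrix (Fin 2) (Fin 2) (Matrix (Fin n) (Fin n) ℝ)) :
    blk2 M + blk2 N = blk2 (M + N) := by
  ext ⟨i, a⟩ ⟨j, b⟩; simp [blk2]

lemma blk2_sub (M N : Matrix (Fin 2) (Fin 2) (Matrix (Fin n) (Fin n) ℝ)) :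
    blk2 M - blk2 N = blk2 (M - N) := by
  ext ⟨i, a⟩ ⟨j, b⟩; simp [blk2]

lemma blk2_zero : blk2 (0 : Matrix (Fin 2) (Fin 2) (Matrix (Fin n) (Fin n) ℝ)) = 0 := by
  ext ⟨i, a⟩ ⟨j, b⟩; simp [blk2]

/-- The algebraic Riccati equation `AᵀP + PA − P B₀ R B₀ᵀ P + Q = 0` for the
closed-loop matrices of the PD-type friction observer `C(s) = −BL(s + L_p)`. -/
theorem pd_riccati_equation
    (n : ℕ) (B : Matrix (Fin n) (Fin n) ℝ) (hBsymm : B.IsSymm) (hB : B.PosDef)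
    (L Lp : ℝ) (hL : 0 < L) (hLp : 0 < Lp)
    (R : Matrix (Fin n) (Fin n) ℝ) (hR : R = L • B)
    (A : Matrix (Fin 2 × Fin n) (Fin 2 × Fin n) ℝ)
    (hA : A = blk2 !![0, 1; 0, -(Lp • 1)])
    (B₀ : Matrix (Fin 2 × Fin n) (Fin n) ℝ)
    (hB₀ : B₀ = blkCol2 ![0, B⁻¹])
    (P : Matrix (Fin 2 × Fin n) (Fin 2 × Fin n) ℝ)
    (hP : P = blk2 !![Lp ^ 2 • B + Lp • R, Lp • B; Lp • B, B])
    (Q : Matrix (Fin 2 × Fin n) (Fin 2 × Fin n) ℝ)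
    (hQ : Q = blk2 !![Lp ^ 2 • R, 0; 0, R]) :
    Aᵀ * P + P * A - P * B₀ * R * B₀ᵀ * P + Q = 0 := by
  have hdet : IsUnit B.det := isUnit_iff_ne_zero.mpr hB.det_pos.ne'
  have hBB : B * B⁻¹ = 1 := Matrix.mul_nonsing_inv B hdet
  have hBB' : B⁻¹ * B = 1 := Matrix.nonsing_inv_mul B hdet
  have hBiT : B⁻¹ᵀ = B⁻¹ := by
    rw [Matrix.transpose_nonsing_inv, hBsymm]
  subst hR hA hB₀ hP hQ
  rw [blk2_transpose, blk2_mul, blk2_mul, blk2_mul_col, col_mul, _root_.col_transpose,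
    col_mul_row, blk2_mul, blk2_add, blk2_sub, blk2_add]
  refine (congrArg blk2 ?_).trans blk2_zero
  refine Matrix.ext fun i j => ?_
  fin_cases i <;> fin_cases j <;>
    simp only [Matrix.mul_apply, Fin.sum_univ_two, Matrix.mulVec, dotProduct, Matrix.of_apply,
      Matrix.cons_val', Matrix.cons_val_zero, Matrix.cons_val_one, Matrix.head_cons,
      Matrix.head_fin_const, Matrix.empty_val', Matrix.cons_val_fin_one, Matrix.transpose_zero,
      Matrix.add_apply, Matrix.sub_apply, Matrix.zero_apply, Pi.add_apply, Pi.sub_apply,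
      Matrix.transpose_add, Matrix.transpose_smul, Matrix.transpose_one, hBiT, hBsymm.eq,
      Fin.mk_zero, Fin.mk_one, Fin.isValue, Matrix.mul_zero, Matrix.zero_mul, Matrix.mul_one,
      Matrix.one_mul, Matrix.smul_mul, Matrix.mul_smul, hBB, hBB', smul_smul,
      Matrix.add_mul, Matrix.mul_add, add_zero, zero_add, Matrix.mul_neg, Matrix.neg_mul,
      smul_add, neg_smul, smul_neg, smul_zero, Matrix.transpose_neg, neg_neg, add_neg_cancel,
      neg_add_cancel, sub_self] <;>
    module
end

section
/- Let B be a symmetric positive definite n×n real matrix, L, L_p > 0 real scalars, R = L·B, and let A = [[0, I], [0, −L_p I]], B₀ = [0; B⁻¹], and τ̂(x) = −R(x₂ + L_p x₁) for x = (x₁, x₂) ∈ ℝ^{2n}. Then for every constant τ̄ ∈ ℝⁿ and constant perturbation w̄ = −τ̄ + L_p B x₂, the equilibrium equation A x + B₀ τ̂(x) + B₀ w̄ = 0 has the unique solution x₂ = 0 and x₁ = −(L L_p)⁻¹ B⁻¹ τ̄; at this equilibrium the observer output equals the steady-state friction, τ̂(x) = τ̄. -/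
open Matrix

lemma blk2_mulVec {n : ℕ} (M : Matrix (Fin 2) (Fin 2) (Matrix (Fin n) (Fin n) ℝ))
    (x₁ x₂ : Fin n → ℝ) :
    blk2 M *ᵥ stack2 x₁ x₂ =
      stack2 (M 0 0 *ᵥ x₁ + M 0 1 *ᵥ x₂) (M 1 0 *ᵥ x₁ + M 1 1 *ᵥ x₂) := by
  funext p
  obtain ⟨i, j⟩ := p
  fin_cases i <;>
    simp [blk2, stack2, Matrix.mulVec, dotProduct, Fintype.sum_prod_type,
      Fin.sum_univ_two]

lemma blkCol2_mulVec {n : ℕ} (M : Fin 2 → Matrix (Fin n) (Fin n) ℝ) (v : Fin n → ℝ) :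
    blkCol2 M *ᵥ v = stack2 (M 0 *ᵥ v) (M 1 *ᵥ v) := by
  funext p
  obtain ⟨i, j⟩ := p
  fin_cases i <;> simp [blkCol2, stack2, Matrix.mulVec, dotProduct]

lemma stack2_add {n : ℕ} (a b c d : Fin n → ℝ) :
    stack2 a b + stack2 c d = stack2 (a + c) (b + d) := by
  funext p
  obtain ⟨i, j⟩ := p
  fin_cases i <;> simp [stack2]

lemma stack2_eq_zero {n : ℕ} (a b : Fin n → ℝ) :
    stack2 a b = 0 ↔ a = 0 ∧ b = 0 := by
  constructor
  · intro h
    constructor <;> funext j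
    · exact congrFun h (0, j)
    · exact congrFun h (1, j)
  · rintro ⟨rfl, rfl⟩
    funext p
    obtain ⟨i, j⟩ := p
    fin_cases i <;> simp [stack2]

lemma stack2_congr {n : ℕ} (a b c d : Fin n → ℝ) (h1 : a = c) (h2 : b = d) :
    stack2 a b = stack2 c d := by rw [h1, h2]

/-- Uniqueness of the equilibrium for the PD-type friction observer with constant
steady-state friction `τ̄`: the equilibrium equation `A x + B₀ τ̂(x) + B₀ w̄ = 0`,
with `τ̂(x) = −R(x₂ + L_p x₁)` and `w̄ = −τ̄ + L_p B x₂`, holds iff `x₂ = 0` and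
`x₁ = −(L L_p)⁻¹ B⁻¹ τ̄`; and at equilibrium `τ̂(x) = τ̄`. -/
theorem pd_unique_equilibrium
    (n : ℕ) (B : Matrix (Fin n) (Fin n) ℝ) (hBsymm : B.IsSymm) (hB : B.PosDef)
    (L Lp : ℝ) (hL : 0 < L) (hLp : 0 < Lp)
    (R : Matrix (Fin n) (Fin n) ℝ) (hR : R = L • B)
    (A : Matrix (Fin 2 × Fin n) (Fin 2 × Fin n) ℝ)
    (hA : A = blk2 !![0, 1; 0, -(Lp • 1)])
    (B₀ : Matrix (Fin 2 × Fin n) (Fin n) ℝ)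
    (hB₀ : B₀ = blkCol2 ![0, B⁻¹]) :
    ∀ (τ' x₁ x₂ : Fin n → ℝ),
      (A *ᵥ stack2 x₁ x₂ + B₀ *ᵥ (-(R *ᵥ (x₂ + Lp • x₁)))
          + B₀ *ᵥ (-τ' + Lp • (B *ᵥ x₂)) = 0 ↔
        x₂ = 0 ∧ x₁ = -((L * Lp)⁻¹ • (B⁻¹ *ᵥ τ'))) ∧
      (A *ᵥ stack2 x₁ x₂ + B₀ *ᵥ (-(R *ᵥ (x₂ + Lp • x₁)))
          + B₀ *ᵥ (-τ' + Lp • (B *ᵥ x₂)) = 0 →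
        -(R *ᵥ (x₂ + Lp • x₁)) = τ') := by
  subst hR hA hB₀
  have hdet : IsUnit B.det := isUnit_iff_ne_zero.mpr hB.det_pos.ne'
  have hBinv : B⁻¹ * B = 1 := Matrix.nonsing_inv_mul B hdet
  have hBinv' : B * B⁻¹ = 1 := Matrix.mul_nonsing_inv B hdet
  have hBB : ∀ w : Fin n → ℝ, B⁻¹ *ᵥ (B *ᵥ w) = w := by
    intro w; rw [Matrix.mulVec_mulVec, hBinv, Matrix.one_mulVec]
  have hBB' : ∀ w : Fin n → ℝ, B *ᵥ (B⁻¹ *ᵥ w) = w := by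
    intro w; rw [Matrix.mulVec_mulVec, hBinv', Matrix.one_mulVec]
  have hLLp : (L * Lp) ≠ 0 := by positivity
  intro τ' x₁ x₂
  have hstack :
      blk2 !![0, 1; 0, -(Lp • 1)] *ᵥ stack2 x₁ x₂
        + blkCol2 ![0, B⁻¹] *ᵥ (-((L • B) *ᵥ (x₂ + Lp • x₁)))
        + blkCol2 ![0, B⁻¹] *ᵥ (-τ' + Lp • (B *ᵥ x₂))
      = stack2 x₂ (-(L • x₂) + (-((L * Lp) • x₁) + -(B⁻¹ *ᵥ τ'))) := by
    rw [blk2_mulVec, blkCol2_mulVec, blkCol2_mulVec, stack2_add, stack2_add]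
    refine stack2_congr _ _ _ _ ?_ ?_
    · simp
    · have h1 : B⁻¹ *ᵥ (-((L • B) *ᵥ (x₂ + Lp • x₁))) = -(L • (x₂ + Lp • x₁)) := by
        rw [Matrix.mulVec_neg, Matrix.smul_mulVec, Matrix.mulVec_smul, hBB]
      have h2 : B⁻¹ *ᵥ (-τ' + Lp • (B *ᵥ x₂)) = -(B⁻¹ *ᵥ τ') + Lp • x₂ := by
        rw [Matrix.mulVec_add, Matrix.mulVec_neg, Matrix.mulVec_smul, hBB]
      rw [show (![0, B⁻¹] : Fin 2 → Matrix (Fin n) (Fin n) ℝ) 1 = B⁻¹ from rfl,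
        h1, h2,
        show (!![0, 1; 0, -(Lp • 1)] : Matrix (Fin 2) (Fin 2) (Matrix (Fin n) (Fin n) ℝ)) 1 0 = 0 from rfl,
        show (!![0, 1; 0, -(Lp • 1)] : Matrix (Fin 2) (Fin 2) (Matrix (Fin n) (Fin n) ℝ)) 1 1 = -(Lp • 1)
          from rfl,
        Matrix.zero_mulVec, Matrix.neg_mulVec, Matrix.smul_mulVec,
        Matrix.one_mulVec, zero_add]
      module
  have hiff :
      blk2 !![0, 1; 0, -(Lp • 1)] *ᵥ stack2 x₁ x₂
        + blkCol2 ![0, B⁻¹] *ᵥ (-((L • B) *ᵥ (x₂ + Lp • x₁)))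
        + blkCol2 ![0, B⁻¹] *ᵥ (-τ' + Lp • (B *ᵥ x₂)) = 0 ↔
      x₂ = 0 ∧ x₁ = -((L * Lp)⁻¹ • (B⁻¹ *ᵥ τ')) := by
    rw [hstack, stack2_eq_zero]
    constructor
    · rintro ⟨rfl, h⟩
      refine ⟨rfl, ?_⟩
      have h' : (L * Lp) • x₁ = -(B⁻¹ *ᵥ τ') := by
        linear_combination (norm := module) -h
      have hx : x₁ = (L * Lp)⁻¹ • ((L * Lp) • x₁) := by
        rw [smul_smul, inv_mul_cancel₀ hLLp, one_smul]
      rw [hx, h', smul_neg]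
    · rintro ⟨rfl, rfl⟩
      refine ⟨rfl, ?_⟩
      have hc : (L * Lp) • -((L * Lp)⁻¹ • (B⁻¹ *ᵥ τ')) = -(B⁻¹ *ᵥ τ') := by
        rw [smul_neg, smul_smul, mul_inv_cancel₀ hLLp, one_smul]
      linear_combination (norm := module) -hc
  refine ⟨hiff, ?_⟩
  intro h
  obtain ⟨rfl, rfl⟩ := hiff.mp h
  have key : (L • B) *ᵥ ((0 : Fin n → ℝ) + Lp • -((L * Lp)⁻¹ • (B⁻¹ *ᵥ τ'))) = -τ' := by
    rw [zero_add, Matrix.smul_mulVec, Matrix.mulVec_smul, Matrix.mulVec_neg,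
      Matrix.mulVec_smul, hBB', smul_neg, smul_neg, smul_smul, smul_smul,
      mul_inv_cancel₀ hLLp, one_smul]
  rw [key, neg_neg]
end

section
/- Let B be a symmetric positive definite n×n real matrix and L, L_p > 0 real scalars. Let e : ℝ → ℝⁿ be continuously differentiable and define the PD-type observer output τ̂_f(t) = −L·B·(ė(t) + L_p e(t)) and the storage function S(t) = (L L_p/2)·e(t)ᵀ B e(t) ≥ 0. Then for all t, S′(t) = (−ė(t))ᵀ τ̂_f(t) − L·ė(t)ᵀ B ė(t) ≤ (−ė(t))ᵀ τ̂_f(t); consequently, for all 0 ≤ T, ∫₀ᵀ (−ė(t))ᵀ τ̂_f(t) dt ≥ S(T) − S(0) ≥ −S(0), i.e. the input–output pair (−ė, τ̂_f) is passive with storage function S. -/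
open Matrix

private lemma cont_dot {n : ℕ} {f g : ℝ → Fin n → ℝ} (hf : Continuous f)
    (hg : Continuous g) : Continuous fun t => f t ⬝ᵥ g t := by
  simp only [dotProduct]
  exact continuous_finset_sum _ fun i _ =>
    ((continuous_apply i).comp hf).mul ((continuous_apply i).comp hg)

private lemma cont_mulVec {n : ℕ} (B : Matrix (Fin n) (Fin n) ℝ) {f : ℝ → Fin n → ℝ}
    (hf : Continuous f) : Continuous fun t => B *ᵥ f t := by
  refine continuous_pi fun i => ?_
  simp only [mulVec, dotProduct]
  exact continuous_finset_sum _ fun j _ =>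
    continuous_const.mul ((continuous_apply j).comp hf)

/-- Passivity of the PD-type friction observer in the stiction region: with observer
output `τ̂_f = −L·B·(ė + L_p e)` and storage function `S = (L L_p/2)·eᵀ B e ≥ 0`,
one has `S′ = (−ė)ᵀ τ̂_f − L·ėᵀ B ė ≤ (−ė)ᵀ τ̂_f`, hence
`∫₀ᵀ (−ė)ᵀ τ̂_f ≥ S(T) − S(0) ≥ −S(0)` for all `T ≥ 0`:
the pair `(−ė, τ̂_f)` is passive. -/
theorem pd_observer_passive
    (n : ℕ) (B : Matrix (Fin n) (Fin n) ℝ) (hBsymm : B.IsSymm) (hB : B.PosDef)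
    (L Lp : ℝ) (hL : 0 < L) (hLp : 0 < Lp)
    (e : ℝ → Fin n → ℝ) (he : ContDiff ℝ 1 e)
    (τhat : ℝ → Fin n → ℝ)
    (hτhat : ∀ t, τhat t = -(L • (B *ᵥ (deriv e t + Lp • e t))))
    (S : ℝ → ℝ)
    (hS : ∀ t, S t = (L * Lp / 2) * (e t ⬝ᵥ (B *ᵥ e t))) :
    (∀ t, 0 ≤ S t) ∧
    (∀ t, deriv S t = (-(deriv e t)) ⬝ᵥ τhat t - L * (deriv e t ⬝ᵥ (B *ᵥ deriv e t))) ∧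
    (∀ t, deriv S t ≤ (-(deriv e t)) ⬝ᵥ τhat t) ∧
    (∀ T : ℝ, 0 ≤ T →
      (S T - S 0 ≤ ∫ t in (0 : ℝ)..T, (-(deriv e t)) ⬝ᵥ τhat t) ∧
      (-S 0 ≤ ∫ t in (0 : ℝ)..T, (-(deriv e t)) ⬝ᵥ τhat t)) := by
  have hquad : ∀ x : Fin n → ℝ, 0 ≤ x ⬝ᵥ (B *ᵥ x) := by
    intro x
    have := hB.posSemidef.dotProduct_mulVec_nonneg x
    simpa using this
  -- symmetry of the bilinear form
  have hsym : ∀ x y : Fin n → ℝ, x ⬝ᵥ (B *ᵥ y) = y ⬝ᵥ (B *ᵥ x) := by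
    intro x y
    rw [dotProduct_mulVec, ← mulVec_transpose, hBsymm.eq, dotProduct_comm]
  -- component derivatives
  have hcomp : ∀ t i, HasDerivAt (fun s => e s i) (deriv e t i) t := by
    intro t i
    exact hasDerivAt_pi.1 ((he.differentiable one_ne_zero t).hasDerivAt) i
  -- derivative of the quadratic form
  have hQ : ∀ t, HasDerivAt (fun s => e s ⬝ᵥ (B *ᵥ e s))
      (deriv e t ⬝ᵥ (B *ᵥ e t) + e t ⬝ᵥ (B *ᵥ deriv e t)) t := by
    intro t
    have : HasDerivAt (fun s => ∑ i, e s i * ∑ j, B i j * e s j)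
        (∑ i, (deriv e t i * ∑ j, B i j * e t j +
               e t i * ∑ j, B i j * deriv e t j)) t := by
      refine HasDerivAt.fun_sum fun i _ => ?_
      exact (hcomp t i).mul (HasDerivAt.fun_sum fun j _ => (hcomp t j).const_mul (B i j))
    simpa [dotProduct, mulVec, Finset.sum_add_distrib] using this
  have hSderiv : ∀ t, HasDerivAt S ((L * Lp) * (deriv e t ⬝ᵥ (B *ᵥ e t))) t := by
    intro t
    have h := ((hQ t).const_mul (L * Lp / 2))
    have heq : (fun s => (L * Lp / 2) * (e s ⬝ᵥ (B *ᵥ e s))) = S := by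
      funext s; exact (hS s).symm
    rw [heq] at h
    refine h.congr_deriv ?_
    rw [hsym (e t) (deriv e t)]
    ring
  -- pointwise identity for the supply rate
  have hg : ∀ t, (-(deriv e t)) ⬝ᵥ τhat t =
      (L * Lp) * (deriv e t ⬝ᵥ (B *ᵥ e t)) + L * (deriv e t ⬝ᵥ (B *ᵥ deriv e t)) := by
    intro t
    rw [hτhat t]
    simp [Matrix.mulVec_add, Matrix.mulVec_smul, dotProduct_add, dotProduct_smul,
      smul_eq_mul, neg_dotProduct, dotProduct_neg, mul_add]
    ring
  have hderivS : ∀ t, deriv S t = (L * Lp) * (deriv e t ⬝ᵥ (B *ᵥ e t)) := fun t =>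
    (hSderiv t).deriv
  refine ⟨?_, ?_, ?_, ?_⟩
  · intro t
    rw [hS t]
    have := hquad (e t)
    positivity
  · intro t
    rw [hderivS t, hg t]; ring
  · intro t
    rw [hderivS t, hg t]
    nlinarith [hquad (deriv e t)]
  · intro T hT
    have hcontE : Continuous e := he.continuous
    have hcontDE : Continuous (deriv e) := he.continuous_deriv le_rfl
    have hcont1 : Continuous fun t => (L * Lp) * (deriv e t ⬝ᵥ (B *ᵥ e t)) :=
      continuous_const.mul (cont_dot hcontDE (cont_mulVec B hcontE))
    have hcontg : Continuous fun t => (-(deriv e t)) ⬝ᵥ τhat t := by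
      have : Continuous fun t => (L * Lp) * (deriv e t ⬝ᵥ (B *ᵥ e t)) +
          L * (deriv e t ⬝ᵥ (B *ᵥ deriv e t)) :=
        hcont1.add (continuous_const.mul (cont_dot hcontDE (cont_mulVec B hcontDE)))
      simpa only [funext hg] using this
    have hftc : ∫ t in (0:ℝ)..T, (L * Lp) * (deriv e t ⬝ᵥ (B *ᵥ e t)) = S T - S 0 :=
      intervalIntegral.integral_eq_sub_of_hasDerivAt
        (fun t _ => hSderiv t) (hcont1.intervalIntegrable 0 T)
    have hmono : ∫ t in (0:ℝ)..T, (L * Lp) * (deriv e t ⬝ᵥ (B *ᵥ e t)) ≤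
        ∫ t in (0:ℝ)..T, (-(deriv e t)) ⬝ᵥ τhat t := by
      refine intervalIntegral.integral_mono_on hT
        (hcont1.intervalIntegrable 0 T) (hcontg.intervalIntegrable 0 T) ?_
      intro t _
      rw [hg t]
      nlinarith [hquad (deriv e t)]
    have h1 : S T - S 0 ≤ ∫ t in (0:ℝ)..T, (-(deriv e t)) ⬝ᵥ τhat t := by
      rw [← hftc]; exact hmono
    refine ⟨h1, ?_⟩
    have hST : 0 ≤ S T := by
      rw [hS T]; have := hquad (e T); positivity
    linarith
end

section
/- Let B be a symmetric positive definite n×n real matrix and L, L_p > 0 real scalars. Let e : ℝ → ℝⁿ be twice continuously differentiable, τ_f : ℝ → ℝⁿ continuous, and S_f : ℝ → ℝ a differentiable function with S_f(t) ≥ 0 and S_f′(t) ≤ ė(t)ᵀ τ_f(t) for all t (passivity of the friction pair (v, −τ_f) with v = −ė). Suppose the closed-loop stiction difference dynamics B ë(t) = τ̂_f(t) − τ_f(t) hold with the PD-type observer output τ̂_f(t) = −L·B·(ė(t) + L_p e(t)). Then the total energy E(t) = ½ ė(t)ᵀ B ė(t) + (L L_p/2) e(t)ᵀ B e(t) + S_f(t)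 satisfies E′(t) = −L·ė(t)ᵀ B ė(t) + (S_f′(t) − ė(t)ᵀτ_f(t)) ≤ −L·ė(t)ᵀ B ė(t) ≤ 0; in particular E is nonincreasing and no energy is generated during stiction compensation. -/
open Matrix

lemma hasDerivAt_dot_mulVec {n : ℕ} (B : Matrix (Fin n) (Fin n) ℝ)
    (x y : ℝ → Fin n → ℝ) (x' y' : Fin n → ℝ) (t : ℝ)
    (hx : HasDerivAt x x' t) (hy : HasDerivAt y y' t) :
    HasDerivAt (fun s => x s ⬝ᵥ (B *ᵥ y s))
      (x' ⬝ᵥ (B *ᵥ y t) + x t ⬝ᵥ (B *ᵥ y')) t := by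
  have hx' := hasDerivAt_pi.mp hx
  have hy' := hasDerivAt_pi.mp hy
  simp only [dotProduct, mulVec, Finset.mul_sum, Finset.sum_mul,
    ← Finset.sum_add_distrib]
  apply HasDerivAt.fun_sum
  intro i _
  apply HasDerivAt.fun_sum
  intro j _
  have := (hx' i).fun_mul (((hy' j).const_mul (B i j)))
  exact this

lemma dot_mulVec_symm {n : ℕ} {B : Matrix (Fin n) (Fin n) ℝ} (hBsymm : B.IsSymm)
    (x y : Fin n → ℝ) : x ⬝ᵥ (B *ᵥ y) = y ⬝ᵥ (B *ᵥ x) := by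
  rw [dotProduct_mulVec, dotProduct_comm, ← mulVec_transpose, hBsymm.eq]

/-- Theorem 2 of the paper for the PD-type observer: in the stiction region, with the
closed-loop difference dynamics `B ë = τ̂_f − τ_f`, PD-type output
`τ̂_f = −L·B·(ė + L_p e)`, and a friction storage function `S_f ≥ 0` with
`S_f′ ≤ ėᵀ τ_f` (passivity of `(−ė, −τ_f)`), the total energy
`E = ½ ėᵀ B ė + (L L_p/2) eᵀ B e + S_f` satisfies
`E′ = −L·ėᵀ B ė + (S_f′ − ėᵀ τ_f) ≤ −L·ėᵀ B ė ≤ 0`, so `E` is nonincreasing. -/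
theorem pd_stiction_no_energy_generation
    (n : ℕ) (B : Matrix (Fin n) (Fin n) ℝ) (hBsymm : B.IsSymm) (hB : B.PosDef)
    (L Lp : ℝ) (hL : 0 < L) (hLp : 0 < Lp)
    (e : ℝ → Fin n → ℝ) (he : ContDiff ℝ 2 e)
    (τf : ℝ → Fin n → ℝ) (hτf : Continuous τf)
    (Sf : ℝ → ℝ) (hSf : Differentiable ℝ Sf)
    (hSf0 : ∀ t, 0 ≤ Sf t)
    (hSfpass : ∀ t, deriv Sf t ≤ deriv e t ⬝ᵥ τf t)
    (τhat : ℝ → Fin n → ℝ)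
    (hτhat : ∀ t, τhat t = -(L • (B *ᵥ (deriv e t + Lp • e t))))
    (hdyn : ∀ t, B *ᵥ deriv (deriv e) t = τhat t - τf t)
    (E : ℝ → ℝ)
    (hE : ∀ t, E t = (1 / 2) * (deriv e t ⬝ᵥ (B *ᵥ deriv e t))
        + (L * Lp / 2) * (e t ⬝ᵥ (B *ᵥ e t)) + Sf t) :
    (∀ t, deriv E t = -L * (deriv e t ⬝ᵥ (B *ᵥ deriv e t))
        + (deriv Sf t - deriv e t ⬝ᵥ τf t)) ∧
    (∀ t, deriv E t ≤ -L * (deriv e t ⬝ᵥ (B *ᵥ deriv e t))) ∧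
    (∀ t, deriv E t ≤ 0) ∧
    Antitone E := by
  have hde : ∀ t, HasDerivAt e (deriv e t) t := fun t =>
    ((he.differentiable (by norm_num)) t).hasDerivAt
  have hde2 : ContDiff ℝ 1 (deriv e) := by
    have := (contDiff_succ_iff_deriv (n := 1)).mp (by exact_mod_cast he)
    exact this.2.2
  have hdde : ∀ t, HasDerivAt (deriv e) (deriv (deriv e) t) t := fun t =>
    ((hde2.differentiable (by norm_num)) t).hasDerivAt
  -- derivative of E
  have hEfun : E = fun t => (1 / 2) * (deriv e t ⬝ᵥ (B *ᵥ deriv e t))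
        + (L * Lp / 2) * (e t ⬝ᵥ (B *ᵥ e t)) + Sf t := funext hE
  have key : ∀ t, HasDerivAt E (-L * (deriv e t ⬝ᵥ (B *ᵥ deriv e t))
        + (deriv Sf t - deriv e t ⬝ᵥ τf t)) t := by
    intro t
    have h1 := (hasDerivAt_dot_mulVec B (deriv e) (deriv e)
      (deriv (deriv e) t) (deriv (deriv e) t) t (hdde t) (hdde t)).const_mul (1/2 : ℝ)
    have h2 := (hasDerivAt_dot_mulVec B e e (deriv e t) (deriv e t) t
      (hde t) (hde t)).const_mul (L * Lp / 2 : ℝ)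
    have h3 := (hSf t).hasDerivAt
    have H := (h1.add h2).add h3
    rw [hEfun]
    refine H.congr_deriv ?_
    -- algebraic identity for the derivative value
    have hsym1 : deriv (deriv e) t ⬝ᵥ (B *ᵥ deriv e t)
        = deriv e t ⬝ᵥ (B *ᵥ deriv (deriv e) t) := dot_mulVec_symm hBsymm _ _
    have hsym2 : deriv e t ⬝ᵥ (B *ᵥ e t) = e t ⬝ᵥ (B *ᵥ deriv e t) :=
      dot_mulVec_symm hBsymm _ _
    have hdd : deriv e t ⬝ᵥ (B *ᵥ deriv (deriv e) t)
        = -L * (deriv e t ⬝ᵥ (B *ᵥ deriv e t))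
          - L * Lp * (deriv e t ⬝ᵥ (B *ᵥ e t)) - deriv e t ⬝ᵥ τf t := by
      rw [hdyn t, hτhat t, mulVec_add, mulVec_smul]
      simp [dotProduct_sub, dotProduct_neg, dotProduct_smul, dotProduct_add,
        smul_eq_mul]
      ring
    rw [hsym1, hdd, ← hsym2]
    ring
  refine ⟨fun t => (key t).deriv, ?_, ?_, ?_⟩
  · intro t
    rw [(key t).deriv]
    have := hSfpass t
    linarith
  · intro t
    rw [(key t).deriv]
    have h1 : 0 ≤ deriv e t ⬝ᵥ (B *ᵥ deriv e t) := by
      have := hB.posSemidef.dotProduct_mulVec_nonneg (deriv e t)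
      simpa using this
    nlinarith [hSfpass t]
  · apply antitone_of_deriv_nonpos
    · exact fun t => (key t).differentiableAt
    · intro t
      rw [(key t).deriv]
      have h1 : 0 ≤ deriv e t ⬝ᵥ (B *ᵥ deriv e t) := by
        have := hB.posSemidef.dotProduct_mulVec_nonneg (deriv e t)
        simpa using this
      nlinarith [hSfpass t]
end
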